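/- arXiv:2409.13666 — 8 statements merged into one kernel-verified Lean document; each statement's English description precedes it below -/
import Mathlib

section
/- Let G be a connected locally finite simple graph and let x and y be adjacent vertices with d(x) ≤ d(y). Then for every coupling σ between the mass distributions μ_x and μ_y, the Lin–Lu–Yau curvature satisfies κ(x,y) ≥ 1 + 1/d(y) − C(σ)/L, where L = lcm(d(x), d(y)) and C(σ) is the transportation cost of σ. -/
open scoped BigOperators

namespace LLY

variable {V : Type*}

/-- Degree of a vertex (as `Nat.card` of its neighbor set; agrees with the usual
degree in a locally finite graph). -/
noncomputable def deg (G : SimpleGraph V) (u : V) : ℕ := Nat.card (G.neighborSet u)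

/-- `G` is locally finite. -/
def LocFin (G : SimpleGraph V) : Prop := ∀ v : V, (G.neighborSet v).Finite

/-- `f` is 1-Lipschitz with respect to the graph distance of `G`. -/
def Lip1 (G : SimpleGraph V) (f : V → ℝ) : Prop :=
  ∀ a b : V, |f a - f b| ≤ (G.dist a b : ℝ)

/-- The (normalized) graph Laplacian `Δf(u) = (1/d(u)) ∑_{v ∈ N(u)} (f v - f u)`. -/
noncomputable def lap (G : SimpleGraph V) (f : V → ℝ) (u : V) : ℝ :=
  (1 / (deg G u : ℝ)) * ∑ᶠ v ∈ G.neighborSet u, (f v - f u)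

/-- The gradient `∇_{xy} f = (f x - f y)/d(x,y)`. -/
noncomputable def grad (G : SimpleGraph V) (f : V → ℝ) (x y : V) : ℝ :=
  (f x - f y) / (G.dist x y : ℝ)

/-- Lin–Lu–Yau curvature of the pair `{x,y}` (limit-free Münch–Wojciechowski form):
`κ(x,y) = inf { ∇_{xy} Δf : f 1-Lipschitz, ∇_{yx} f = 1 }`. -/
noncomputable def kappa (G : SimpleGraph V) (x y : V) : ℝ :=
  sInf {k : ℝ | ∃ f : V → ℝ, Lip1 G f ∧ grad G f y x = 1 ∧ k = grad G (lap G f) x y}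

end LLY

namespace LLY

variable {V : Type*}

/-- `c_x = lcm(d(x),d(y))/d(x)`. -/
noncomputable def cX (G : SimpleGraph V) (x y : V) : ℕ :=
  Nat.lcm (deg G x) (deg G y) / deg G x

/-- `c_y = lcm(d(x),d(y))/d(y)`. -/
noncomputable def cY (G : SimpleGraph V) (x y : V) : ℕ :=
  Nat.lcm (deg G x) (deg G y) / deg G y

open Classical in
/-- The mass distribution `μ_x`: `c_x - c_y` on `y` and on common neighbors of `x,y`,
`c_x` on `N(x) \ N[y]`, and `0` elsewhere. -/
noncomputable def muX (G : SimpleGraph V) (x y : V) (u : V) : ℤ :=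
  if u = y ∨ u ∈ G.neighborSet x ∩ G.neighborSet y then (cX G x y : ℤ) - (cY G x y : ℤ)
  else if u ∈ G.neighborSet x \ (G.neighborSet y ∪ {y}) then (cX G x y : ℤ)
  else 0

open Classical in
/-- The mass distribution `μ_y`: `c_y` on `N(y) \ N[x]` and `0` elsewhere. -/
noncomputable def muY (G : SimpleGraph V) (x y : V) (u : V) : ℤ :=
  if u ∈ G.neighborSet y \ (G.neighborSet x ∪ {x}) then (cY G x y : ℤ) else 0

/-- `σ` is a coupling between `μ_x` and `μ_y`: a finitely supported, nonnegative,
integer-valued map with the prescribed marginals. -/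
def IsCoupling (G : SimpleGraph V) (x y : V) (σ : V × V → ℤ) : Prop :=
  (Function.support σ).Finite ∧
  (∀ p : V × V, 0 ≤ σ p) ∧
  (∀ z : V, ∑ᶠ v : V, σ (z, v) = muX G x y z) ∧
  (∀ z : V, ∑ᶠ u : V, σ (u, z) = muY G x y z)

/-- The transportation cost `C(σ) = ∑_{u,v} σ(u,v) d(u,v)`. -/
noncomputable def cost (G : SimpleGraph V) (σ : V × V → ℤ) : ℝ :=
  ∑ᶠ p : V × V, (σ p : ℝ) * (G.dist p.1 p.2 : ℝ)

end LLY

/-!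
Put `L = lcm(d(x), d(y))`. Since `c_x d(x) = c_y d(y) = L`, for every `f`
`L (Δf(x) - Δf(y)) = c_x ∑_{N(x)} f - c_y ∑_{N(y)} f - L (f(x) - f(y))`, and the two
neighbourhood measures differ from the transported ones by a point mass at each endpoint:
`c_x 𝟙_{N(x)} - c_y 𝟙_{N(y)} = μ_x - μ_y + c_y (δ_y - δ_x)`.
For a 1-Lipschitz `f` with `f(y) - f(x) = 1` this gives
`L (Δf(x) - Δf(y)) = L + c_y + ∑ (μ_x - μ_y) f`, and the last sum is at least `-C(σ)` because
`σ` transports `μ_x` to `μ_y`. Dividing by `L` and using `c_y / L = 1 / d(y)` gives the bound.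
-/

open Function

theorem Int.cast_finsum {ι R : Type*} [AddCommGroupWithOne R] {f : ι → ℤ}
    (hf : HasFiniteSupport f) : ((∑ᶠ i, f i : ℤ) : R) = ∑ᶠ i, (f i : R) := by
  simpa using map_finsum (Int.castAddHom R) hf

section Transport

variable {α : Type*} {σ : α × α → ℤ}

theorem finsum_fst_marginal_mul (hσ : HasFiniteSupport σ) (f : α → ℝ) :
    ∑ᶠ u, ((∑ᶠ v, σ (u, v) : ℤ) : ℝ) * f u = ∑ᶠ p, (σ p : ℝ) * f p.1 := by
  rw [finsum_curry _ ((hσ.fun_comp Int.cast_zero).mul_left _)]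
  refine finsum_congr fun u => ?_
  have hrow : HasFiniteSupport fun v => σ (u, v) := hσ.comp_of_injective (Prod.mk_right_injective u)
  rw [Int.cast_finsum hrow, finsum_mul' _ _ (hrow.fun_comp Int.cast_zero)]

theorem finsum_snd_marginal_mul (hσ : HasFiniteSupport σ) (f : α → ℝ) :
    ∑ᶠ v, ((∑ᶠ u, σ (u, v) : ℤ) : ℝ) * f v = ∑ᶠ p, (σ p : ℝ) * f p.2 :=
  (finsum_fst_marginal_mul (hσ.comp_of_injective Prod.swap_injective) f).trans
    (finsum_comp_equiv (Equiv.prodComm α α) (f := fun p => (σ p : ℝ) * f p.2))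

/-- The easy half of Kantorovich duality. -/
theorem neg_finsum_cost_le_finsum_marginal_sub (hσ : HasFiniteSupport σ)
    (hσ_nonneg : ∀ p, 0 ≤ σ p) {d : α → α → ℝ} {f : α → ℝ} (hf : ∀ a b, |f a - f b| ≤ d a b) :
    -∑ᶠ p, (σ p : ℝ) * d p.1 p.2 ≤
      ∑ᶠ u, ((∑ᶠ v, σ (u, v) : ℤ) : ℝ) * f u - ∑ᶠ v, ((∑ᶠ u, σ (u, v) : ℤ) : ℝ) * f v := by
  have hw (g : α × α → ℝ) : HasFiniteSupport fun p => (σ p : ℝ) * g p :=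
    (hσ.fun_comp Int.cast_zero).mul_left g
  rw [finsum_fst_marginal_mul hσ, finsum_snd_marginal_mul hσ, ← finsum_sub_distrib (hw _) (hw _),
    ← finsum_neg_distrib]
  refine finsum_le_finsum' (hw _).neg ((hw _).sub (hw _)) fun p => ?_
  have hp : -d p.1 p.2 ≤ f p.1 - f p.2 := (abs_le.mp (hf p.1 p.2)).1
  have hσp : (0 : ℝ) ≤ σ p := mod_cast hσ_nonneg p
  simpa [mul_sub, mul_neg] using mul_le_mul_of_nonneg_left hp hσp

end Transport

namespace LLY

variable {V : Type*} {G : SimpleGraph V}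

theorem lip1_dist_left (hconn : G.Connected) (x : V) : Lip1 G fun u => (G.dist x u : ℝ) := by
  intro a b
  have hab : (G.dist x a : ℝ) ≤ G.dist x b + G.dist a b := by
    rw [G.dist_comm (u := a)]
    exact_mod_cast hconn.dist_triangle
  have hba : (G.dist x b : ℝ) ≤ G.dist x a + G.dist a b := mod_cast hconn.dist_triangle
  exact abs_sub_le_iff.mpr ⟨by linarith, by linarith⟩

theorem le_kappa_of_adj (hconn : G.Connected) {x y : V} (hxy : G.Adj x y) {b : ℝ}
    (h : ∀ f, Lip1 G f → f y - f x = 1 → b ≤ lap G f x - lap G f y) : b ≤ kappa G x y := by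
  have hd : G.dist x y = 1 := SimpleGraph.dist_eq_one_iff_adj.mpr hxy
  have hd' : G.dist y x = 1 := SimpleGraph.dist_eq_one_iff_adj.mpr hxy.symm
  apply le_csInf
  · exact ⟨_, _, lip1_dist_left hconn x, by simp [grad, hd, hd'], rfl⟩
  · rintro k ⟨f, hf, hgrad, rfl⟩
    simp only [grad, hd, hd', Nat.cast_one, div_one] at hgrad ⊢
    exact h f hf hgrad

section LocallyFinite

variable [G.LocallyFinite]

theorem deg_eq_degree (u : V) : deg G u = G.degree u := by
  rw [deg, Nat.card_eq_fintype_card, SimpleGraph.card_neighborSet_eq_degree]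

theorem mul_lap_of_dvd {u : V} {n : ℕ} (hu : deg G u ≠ 0) (hn : deg G u ∣ n) (f : V → ℝ) :
    (n : ℝ) * lap G f u = ((n / deg G u : ℕ) : ℝ) * ∑ v ∈ G.neighborFinset u, f v - n * f u := by
  obtain ⟨k, rfl⟩ := hn
  rw [lap, ← SimpleGraph.coe_neighborFinset, finsum_mem_coe_finset, Finset.sum_sub_distrib,
    Finset.sum_const, SimpleGraph.card_neighborFinset_eq_degree, ← deg_eq_degree,
    Nat.mul_div_cancel_left k (Nat.pos_of_ne_zero hu)]
  have : (deg G u : ℝ) ≠ 0 := mod_cast hu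
  field_simp
  push_cast
  ring

open Classical in
theorem muX_sub_muY {x y : V} (hxy : G.Adj x y) (u : V) :
    muX G x y u - muY G x y u =
      (if u ∈ G.neighborFinset x then (cX G x y : ℤ) else 0)
        - (if u ∈ G.neighborFinset y then (cY G x y : ℤ) else 0)
        + (if u = x then (cY G x y : ℤ) else 0) - (if u = y then (cY G x y : ℤ) else 0) := by
  have hyx := hxy.symm
  by_cases hux : u = x <;> by_cases huy : u = y <;> by_cases hxu : G.Adj x u <;>
    by_cases hyu : G.Adj y u <;> simp_all [muX, muY]

theorem support_muX_subset {x y : V} (hxy : G.Adj x y) :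
    support (muX G x y) ⊆ G.neighborFinset x := by
  intro u hu
  by_contra hxu
  simp_all [muX]

theorem support_muY_subset (x y : V) : support (muY G x y) ⊆ G.neighborFinset y := by
  intro u hu
  by_contra hyu
  simp_all [muY]

theorem finsum_muX_mul_sub_finsum_muY_mul {x y : V} (hxy : G.Adj x y) (f : V → ℝ) :
    ∑ᶠ u, (muX G x y u : ℝ) * f u - ∑ᶠ u, (muY G x y u : ℝ) * f u =
      cX G x y * ∑ v ∈ G.neighborFinset x, f v - cY G x y * ∑ v ∈ G.neighborFinset y, f v
        + cY G x y * (f x - f y) := by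
  classical
  set U := G.neighborFinset x ∪ G.neighborFinset y
  have hx : x ∈ U := Finset.mem_union_right _ (by simpa using hxy.symm)
  have hy : y ∈ U := Finset.mem_union_left _ (by simpa using hxy)
  have hUx : U ∩ G.neighborFinset x = G.neighborFinset x := Finset.union_inter_cancel_left
  have hUy : U ∩ G.neighborFinset y = G.neighborFinset y := Finset.union_inter_cancel_right
  have hsupp {μ : V → ℤ} (hμ : support μ ⊆ U) : support (fun u => (μ u : ℝ) * f u) ⊆ U :=
    fun u hu => hμ fun h => hu (by simp [h])
  have hXU : support (muX G x y) ⊆ U :=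
    (support_muX_subset hxy).trans (Finset.coe_subset.mpr Finset.subset_union_left)
  have hYU : support (muY G x y) ⊆ U :=
    (support_muY_subset x y).trans (Finset.coe_subset.mpr Finset.subset_union_right)
  rw [finsum_eq_sum_of_support_subset _ (hsupp hXU), finsum_eq_sum_of_support_subset _ (hsupp hYU),
    ← Finset.sum_sub_distrib]
  simp_rw [← sub_mul, ← Int.cast_sub, muX_sub_muY hxy]
  push_cast
  simp only [add_mul, sub_mul, ite_mul, zero_mul, Finset.sum_add_distrib, Finset.sum_sub_distrib,
    Finset.sum_ite_mem, Finset.sum_ite_eq', if_pos hx, if_pos hy, hUx, hUy, Finset.mul_sum]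
  ring

end LocallyFinite

end LLY

open LLY in
theorem lly_coupling_lower_bound_general {V : Type*} (G : SimpleGraph V)
    (hconn : G.Connected) (hfin : LocFin G) (x y : V) (hxy : G.Adj x y)
    (σ : V × V → ℤ) (hσ : IsCoupling G x y σ) :
    kappa G x y ≥
      1 + 1 / (deg G y : ℝ) - cost G σ / (Nat.lcm (deg G x) (deg G y) : ℝ) := by
  let _ : G.LocallyFinite := fun v => (hfin v).fintype
  obtain ⟨hσ_fin, hσ_nonneg, hσ_fst, hσ_snd⟩ := hσ
  have hdx : deg G x ≠ 0 := by
    rw [deg_eq_degree]; exact (G.degree_pos_iff_exists_adj x).mpr ⟨y, hxy⟩ |>.ne'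
  have hdy : deg G y ≠ 0 := by
    rw [deg_eq_degree]; exact (G.degree_pos_iff_exists_adj y).mpr ⟨x, hxy.symm⟩ |>.ne'
  set L := Nat.lcm (deg G x) (deg G y)
  have hL : (L : ℝ) ≠ 0 := mod_cast Nat.lcm_ne_zero hdx hdy
  have hcY : (cY G x y : ℝ) * deg G y = L := mod_cast Nat.div_mul_cancel (Nat.dvd_lcm_right _ _)
  refine le_kappa_of_adj hconn hxy fun f hf hfyx => ?_
  have htransport := neg_finsum_cost_le_finsum_marginal_sub hσ_fin hσ_nonneg hf
  simp only [hσ_fst, hσ_snd, finsum_muX_mul_sub_finsum_muY_mul hxy] at htransport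
  change -cost G σ ≤ _ at htransport
  have hlx : (L : ℝ) * lap G f x = cX G x y * ∑ v ∈ G.neighborFinset x, f v - L * f x :=
    mul_lap_of_dvd hdx (Nat.dvd_lcm_left _ _) f
  have hly : (L : ℝ) * lap G f y = cY G x y * ∑ v ∈ G.neighborFinset y, f v - L * f y :=
    mul_lap_of_dvd hdy (Nat.dvd_lcm_right _ _) f
  rw [show 1 + 1 / (deg G y : ℝ) - cost G σ / L = (L + cY G x y - cost G σ) / L by
    field_simp; linear_combination -hcY]
  rw [div_le_iff₀ (by positivity)]
  linear_combination htransport - hlx + hly - (L + cY G x y : ℝ) * hfyx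

open LLY in
/-- For a connected locally finite simple graph `G`, adjacent vertices
`x, y` with `d(x) ≤ d(y)`, and any coupling `σ` between `μ_x` and `μ_y`,
`κ(x,y) ≥ 1 + 1/d(y) - C(σ)/lcm(d(x),d(y))`. -/
theorem lly_coupling_lower_bound {V : Type*} (G : SimpleGraph V)
    (hconn : G.Connected) (hfin : LocFin G) (x y : V) (hxy : G.Adj x y)
    (hdeg : deg G x ≤ deg G y) (σ : V × V → ℤ) (hσ : IsCoupling G x y σ) :
    kappa G x y ≥
      1 + 1 / (deg G y : ℝ) - cost G σ / (Nat.lcm (deg G x) (deg G y) : ℝ) :=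
  lly_coupling_lower_bound_general G hconn hfin x y hxy σ hσ
end

section
/- Let G be a connected locally finite simple graph and let xy be an edge of G with d(x) = 3 ≤ d(y). Assume N(x) ∩ N(y) ≠ ∅, and assume that if d(y) ≥ 4 then y has a neighbor u₂ ∉ N[x] such that u₂ is adjacent to some vertex u₁ ∈ N(x) ∩ N(y). If |N(x) ∩ N(y)| = 1 and d(y) ≤ 4, then κ(x,y) > 0. -/
open scoped BigOperators

section Helpers
variable {V : Type*}

lemma finsum_mem_triple {a b c : V} (g : V → ℝ) (hab : a ≠ b) (hac : a ≠ c) (hbc : b ≠ c) :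
    ∑ᶠ v ∈ ({a, b, c} : Set V), g v = g a + g b + g c := by
  classical
  rw [show ({a, b, c} : Set V) = (↑({a, b, c} : Finset V)) by simp, finsum_mem_coe_finset]
  rw [Finset.sum_insert (by simp [hab, hac]), Finset.sum_insert (by simp [hbc]),
    Finset.sum_singleton]
  ring

lemma finsum_mem_quad {a b c d : V} (g : V → ℝ) (hab : a ≠ b) (hac : a ≠ c) (had : a ≠ d)
    (hbc : b ≠ c) (hbd : b ≠ d) (hcd : c ≠ d) :
    ∑ᶠ v ∈ ({a, b, c, d} : Set V), g v = g a + g b + g c + g d := by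
  classical
  rw [show ({a, b, c, d} : Set V) = (↑({a, b, c, d} : Finset V)) by simp, finsum_mem_coe_finset]
  rw [Finset.sum_insert (by simp [hab, hac, had]), Finset.sum_insert (by simp [hbc, hbd]),
    Finset.sum_insert (by simp [hcd]), Finset.sum_singleton]
  ring

lemma eq_triple_of_ncard (s : Set V) (h : s.ncard = 3) (a b : V) (ha : a ∈ s) (hb : b ∈ s)
    (hab : a ≠ b) : ∃ c, c ∈ s ∧ c ≠ a ∧ c ≠ b ∧ s = {a, b, c} := by
  classical
  have hsub : ({a, b} : Set V) ⊆ s := by rintro v (rfl | rfl) <;> assumption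
  have hd : (s \ {a, b}).ncard = 1 := by
    rw [Set.ncard_diff hsub (Set.toFinite _), h, Set.ncard_pair hab]
  obtain ⟨c, hc⟩ := Set.ncard_eq_one.mp hd
  have hcm : c ∈ s \ ({a, b} : Set V) := by rw [hc]; exact rfl
  refine ⟨c, hcm.1, ?_, ?_, ?_⟩
  · intro h'; exact hcm.2 (by simp [h'])
  · intro h'; exact hcm.2 (by simp [h'])
  · have := Set.union_diff_cancel hsub
    rw [hc] at this
    rw [← this]
    ext v; simp; tauto

lemma eq_quad_of_ncard (s : Set V) (h : s.ncard = 4) (a b c : V) (ha : a ∈ s) (hb : b ∈ s)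
    (hc : c ∈ s) (hab : a ≠ b) (hac : a ≠ c) (hbc : b ≠ c) :
    ∃ d, d ∈ s ∧ d ≠ a ∧ d ≠ b ∧ d ≠ c ∧ s = {a, b, c, d} := by
  classical
  have hsub : ({a, b, c} : Set V) ⊆ s := by rintro v (rfl | rfl | rfl) <;> assumption
  have h3 : ({a, b, c} : Set V).ncard = 3 := by
    rw [Set.ncard_insert_of_notMem (by simp [hab, hac]), Set.ncard_pair hbc]
  have hd : (s \ {a, b, c}).ncard = 1 := by
    rw [Set.ncard_diff hsub (Set.toFinite _), h, h3]
  obtain ⟨d, hdd⟩ := Set.ncard_eq_one.mp hd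
  have hdm : d ∈ s \ ({a, b, c} : Set V) := by rw [hdd]; exact rfl
  refine ⟨d, hdm.1, ?_, ?_, ?_, ?_⟩
  · intro h'; exact hdm.2 (by simp [h'])
  · intro h'; exact hdm.2 (by simp [h'])
  · intro h'; exact hdm.2 (by simp [h'])
  · have := Set.union_diff_cancel hsub
    rw [hdd] at this
    rw [← this]
    ext v; simp; tauto

end Helpers

open LLY in
/-- **Lemma 2(i).** Let `xy` be an edge with `d(x) = 3 ≤ d(y)`,
`N(x) ∩ N(y) ≠ ∅`, and if `d(y) ≥ 4` then `y` has a neighbor `u₂ ∉ N[x]` adjacent to some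
`u₁ ∈ N(x) ∩ N(y)`. If `|N(x) ∩ N(y)| = 1` and `d(y) ≤ 4`, then `κ(x,y) > 0`. -/
theorem pos_curv_one_common_neighbor {V : Type*} (G : SimpleGraph V)
    (hconn : G.Connected) (hfin : LocFin G) (x y : V) (hxy : G.Adj x y)
    (hdx : deg G x = 3) (hdxy : 3 ≤ deg G y)
    (hcommon : (G.neighborSet x ∩ G.neighborSet y).Nonempty)
    (hu2 : 4 ≤ deg G y → ∃ u₂ : V, G.Adj y u₂ ∧ u₂ ∉ G.neighborSet x ∪ {x} ∧
      ∃ u₁ ∈ G.neighborSet x ∩ G.neighborSet y, G.Adj u₂ u₁)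
    (hcard : Nat.card ↥(G.neighborSet x ∩ G.neighborSet y) = 1)
    (hdy : deg G y ≤ 4) :
    0 < kappa G x y := by
  classical
  obtain ⟨u₁, hu₁x, hu₁y⟩ := hcommon
  have hdist1 : ∀ a b : V, G.Adj a b → (G.dist a b : ℝ) = 1 := by
    intro a b h
    rw [SimpleGraph.dist_eq_one_iff_adj.mpr h]; norm_num
  have hdxy1 : G.dist x y = 1 := SimpleGraph.dist_eq_one_iff_adj.mpr hxy
  -- the unique common neighbor
  have hint : G.neighborSet x ∩ G.neighborSet y = {u₁} := by
    have h1 : (G.neighborSet x ∩ G.neighborSet y).ncard = 1 := by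
      rw [← Nat.card_coe_set_eq, hcard]
    obtain ⟨a, ha⟩ := Set.ncard_eq_one.mp h1
    have : u₁ ∈ ({a} : Set V) := ha ▸ (Set.mem_inter hu₁x hu₁y)
    rw [ha, Set.mem_singleton_iff.mp this]
  -- structure of N(x)
  have hncx : (G.neighborSet x).ncard = 3 := by
    rw [← Nat.card_coe_set_eq]; exact hdx
  have hyu₁ : y ≠ u₁ := by
    rintro rfl; exact G.irrefl hu₁y
  obtain ⟨z, hz, hzy, hzu₁, hNx⟩ :=
    eq_triple_of_ncard _ hncx y u₁ hxy hu₁x hyu₁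
  have hxu₁ : x ≠ u₁ := by
    rintro rfl; exact G.irrefl hu₁x
  -- basic Lipschitz consequences, common to both cases
  have key : ∀ f : V → ℝ, Lip1 G f → grad G f y x = 1 →
      (1:ℝ)/12 ≤ grad G (lap G f) x y := by
    intro f hLip hgrad
    have hfy : f y - f x = 1 := by
      have : (f y - f x) / (G.dist y x : ℝ) = 1 := hgrad
      rw [SimpleGraph.dist_comm, hdxy1] at this
      simpa using this
    have hA : |f u₁ - f x| ≤ 1 := by
      have := hLip u₁ x; rwa [hdist1 u₁ x (G.adj_symm hu₁x)] at this
    have hA' : |f u₁ - f y| ≤ 1 := by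
      have := hLip u₁ y; rwa [hdist1 u₁ y (G.adj_symm hu₁y)] at this
    have hB : |f z - f x| ≤ 1 := by
      have := hLip z x; rwa [hdist1 z x (G.adj_symm hz)] at this
    have hgradeq : grad G (lap G f) x y = lap G f x - lap G f y := by
      unfold grad; rw [hdxy1]; norm_num
    have hlapx : lap G f x = (1/3) * ((f y - f x) + (f u₁ - f x) + (f z - f x)) := by
      unfold lap
      rw [hdx, hNx, finsum_mem_triple _ hyu₁ hzy.symm hzu₁.symm]
      push_cast; ring
    rw [hgradeq]
    -- case split on deg y
    interval_cases hdegy : deg G y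
    · -- deg y = 3
      have hncy : (G.neighborSet y).ncard = 3 := by
        rw [← Nat.card_coe_set_eq]; exact hdegy
      obtain ⟨w, hw, hwx, hwu₁, hNy⟩ :=
        eq_triple_of_ncard _ hncy x u₁ (G.adj_symm hxy) hu₁y hxu₁
      have hC : |f w - f y| ≤ 1 := by
        have := hLip w y; rwa [hdist1 w y (G.adj_symm hw)] at this
      have hlapy : lap G f y = (1/3) * ((f x - f y) + (f u₁ - f y) + (f w - f y)) := by
        unfold lap
        rw [hdegy, hNy, finsum_mem_triple _ hxu₁ hwx.symm hwu₁.symm]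
        push_cast; ring
      rw [hlapx, hlapy]
      rw [abs_le] at hA hA' hB hC
      linarith [hA.1, hA.2, hA'.1, hA'.2, hB.1, hB.2, hC.1, hC.2]
    · -- deg y = 4
      obtain ⟨u₂, hyu₂, hu₂n, u₁', hu₁', hadj⟩ := hu2 (by omega)
      have hu₁'eq : u₁' = u₁ := by
        have : u₁' ∈ ({u₁} : Set V) := hint ▸ hu₁'
        exact this
      rw [hu₁'eq] at hadj
      have hu₂x : u₂ ≠ x := by
        rintro rfl; exact hu₂n (Set.mem_union_right _ rfl)
      have hu₂u₁ : u₂ ≠ u₁ := by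
        rintro rfl; exact hu₂n (Set.mem_union_left _ hu₁x)
      have hu₂y : u₂ ∈ G.neighborSet y := hyu₂
      have hncy : (G.neighborSet y).ncard = 4 := by
        rw [← Nat.card_coe_set_eq]; exact hdegy
      obtain ⟨w, hw, hwx, hwu₁, hwu₂, hNy⟩ :=
        eq_quad_of_ncard _ hncy x u₁ u₂ (G.adj_symm hxy) hu₁y hu₂y hxu₁ hu₂x.symm hu₂u₁.symm
      have hC : |f w - f y| ≤ 1 := by
        have := hLip w y; rwa [hdist1 w y (G.adj_symm hw)] at this
      have hD : |f u₂ - f u₁| ≤ 1 := by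
        have := hLip u₂ u₁; rwa [hdist1 u₂ u₁ hadj] at this
      have hlapy : lap G f y = (1/4) * ((f x - f y) + (f u₁ - f y) + (f u₂ - f y) + (f w - f y)) := by
        unfold lap
        rw [hdegy, hNy,
          finsum_mem_quad _ hxu₁ hu₂x.symm.symm.symm hwx.symm hu₂u₁.symm.symm.symm hwu₁.symm hwu₂.symm]
        push_cast; ring
      rw [hlapx, hlapy]
      rw [abs_le] at hA hA' hB hC hD
      linarith [hA.1, hA.2, hA'.1, hA'.2, hB.1, hB.2, hC.1, hC.2, hD.1, hD.2]
  -- nonemptiness of the constraint set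
  set S := {k : ℝ | ∃ f : V → ℝ, Lip1 G f ∧ grad G f y x = 1 ∧ k = grad G (lap G f) x y} with hS
  have hne : S.Nonempty := by
    refine ⟨grad G (lap G (fun v => (G.dist v x : ℝ))) x y, fun v => (G.dist v x : ℝ), ?_, ?_, rfl⟩
    · intro a b
      rw [abs_sub_le_iff]
      constructor
      · have h1 := hconn.dist_triangle (u := a) (v := b) (w := x)
        have : (G.dist a x : ℝ) ≤ (G.dist a b : ℝ) + (G.dist b x : ℝ) := by exact_mod_cast h1
        linarith
      · have h1 := hconn.dist_triangle (u := b) (v := a) (w := x)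
        have : (G.dist b x : ℝ) ≤ (G.dist b a : ℝ) + (G.dist a x : ℝ) := by exact_mod_cast h1
        rw [SimpleGraph.dist_comm (u := b) (v := a)] at this
        linarith
    · show ((G.dist y x : ℝ) - (G.dist x x : ℝ)) / (G.dist y x : ℝ) = 1
      rw [SimpleGraph.dist_comm (u := y) (v := x), hdxy1, SimpleGraph.dist_self]
      norm_num
  have hlb : (1:ℝ)/12 ≤ sInf S := by
    apply le_csInf hne
    rintro k ⟨f, hLip, hgrad, rfl⟩
    exact key f hLip hgrad
  have : kappa G x y = sInf S := rfl
  rw [this]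
  linarith
end

section
/- Let G be a connected locally finite simple graph and let xy be an edge of G with d(x) = 3 ≤ d(y). Assume N(x) ∩ N(y) ≠ ∅, and assume that if d(y) ≥ 4 then y has a neighbor u₂ ∉ N[x] such that u₂ is adjacent to some vertex u₁ ∈ N(x) ∩ N(y). If |N(x) ∩ N(y)| = 2 and d(y) ≤ 10, then κ(x,y) > 0. -/
open scoped BigOperators

namespace LLY

variable {V : Type*}

lemma deg_eq_card (G : SimpleGraph V) (u : V) (h : (G.neighborSet u).Finite) :
    deg G u = h.toFinset.card := by
  rw [deg, Nat.card_coe_set_eq, Set.ncard_eq_toFinset_card _ h]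

lemma lap_eq (G : SimpleGraph V) (f : V → ℝ) (u : V) (h : (G.neighborSet u).Finite) :
    lap G f u = (1 / (deg G u : ℝ)) * ∑ v ∈ h.toFinset, (f v - f u) := by
  rw [lap]
  congr 1
  conv_lhs => rw [← Set.Finite.coe_toFinset h]
  rw [finsum_mem_coe_finset]

lemma arith_aux (a b c D : ℝ) (ha0 : 0 ≤ a) (ha1 : a ≤ 1) (hb0 : 0 ≤ b) (hb1 : b ≤ 1)
    (hc : c = a ∨ c = b) (hD4 : 4 ≤ D) (hD10 : D ≤ 10) :
    (1:ℝ)/30 ≤ (1 + a + b)/3 - (c + a + b + (D - 7)) / D := by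
  have hDpos : (0:ℝ) < D := by linarith
  rw [div_sub_div _ _ (by norm_num : (3:ℝ) ≠ 0) (ne_of_gt hDpos),
    div_le_div_iff₀ (by norm_num) (by positivity)]
  have p2 : 0 ≤ (1 - a) * (10 - D) := mul_nonneg (by linarith) (by linarith)
  have p3 : 0 ≤ b * (D - 4) := mul_nonneg hb0 (by linarith)
  have p2' : 0 ≤ (1 - b) * (10 - D) := mul_nonneg (by linarith) (by linarith)
  have p3' : 0 ≤ a * (D - 4) := mul_nonneg ha0 (by linarith)
  rcases hc with rfl | rfl
  · nlinarith [p2, p3]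
  · nlinarith [p2', p3']

end LLY

open LLY in
/-- **Lemma 2(ii).** Let `xy` be an edge with `d(x) = 3 ≤ d(y)`,
`N(x) ∩ N(y) ≠ ∅`, and if `d(y) ≥ 4` then `y` has a neighbor `u₂ ∉ N[x]` adjacent to some
`u₁ ∈ N(x) ∩ N(y)`. If `|N(x) ∩ N(y)| = 2` and `d(y) ≤ 10`, then `κ(x,y) > 0`. -/
theorem pos_curv_two_common_neighbors {V : Type*} (G : SimpleGraph V)
    (hconn : G.Connected) (hfin : LocFin G) (x y : V) (hxy : G.Adj x y)
    (hdx : deg G x = 3) (hdxy : 3 ≤ deg G y)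
    (hcommon : (G.neighborSet x ∩ G.neighborSet y).Nonempty)
    (hu2 : 4 ≤ deg G y → ∃ u₂ : V, G.Adj y u₂ ∧ u₂ ∉ G.neighborSet x ∪ {x} ∧
      ∃ u₁ ∈ G.neighborSet x ∩ G.neighborSet y, G.Adj u₂ u₁)
    (hcard : Nat.card ↥(G.neighborSet x ∩ G.neighborSet y) = 2)
    (hdy : deg G y ≤ 10) :
    0 < kappa G x y := by
  classical
  have hdxy1 : G.dist x y = 1 := SimpleGraph.dist_eq_one_iff_adj.2 hxy
  have hdyx1 : G.dist y x = 1 := SimpleGraph.dist_eq_one_iff_adj.2 hxy.symm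
  set sx : Finset V := (hfin x).toFinset with hsx
  set sy : Finset V := (hfin y).toFinset with hsy
  have hmemx : ∀ v, v ∈ sx ↔ G.Adj x v := by
    intro v; simp [hsx, Set.Finite.mem_toFinset, SimpleGraph.mem_neighborSet]
  have hmemy : ∀ v, v ∈ sy ↔ G.Adj y v := by
    intro v; simp [hsy, Set.Finite.mem_toFinset, SimpleGraph.mem_neighborSet]
  have hcardx : sx.card = 3 := by rw [← deg_eq_card G x (hfin x), hdx]
  have hcardy : sy.card = deg G y := (deg_eq_card G y (hfin y)).symm
  have hT : (G.neighborSet x ∩ G.neighborSet y).ncard = 2 := by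
    rw [← Nat.card_coe_set_eq]; exact hcard
  obtain ⟨w₁, w₂, hw12, hTeq⟩ := Set.ncard_eq_two.1 hT
  have hw1 : w₁ ∈ G.neighborSet x ∩ G.neighborSet y := by rw [hTeq]; simp
  have hw2 : w₂ ∈ G.neighborSet x ∩ G.neighborSet y := by rw [hTeq]; simp
  have haxw1 : G.Adj x w₁ := hw1.1
  have hayw1 : G.Adj y w₁ := hw1.2
  have haxw2 : G.Adj x w₂ := hw2.1
  have hayw2 : G.Adj y w₂ := hw2.2
  have hyw1 : y ≠ w₁ := fun h => (G.irrefl) (h ▸ hayw1)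
  have hyw2 : y ≠ w₂ := fun h => (G.irrefl) (h ▸ hayw2)
  have hxw1 : x ≠ w₁ := haxw1.ne
  have hxw2 : x ≠ w₂ := haxw2.ne
  have hsxeq : sx = {y, w₁, w₂} := by
    have hsub : ({y, w₁, w₂} : Finset V) ⊆ sx := by
      intro v hv
      simp only [Finset.mem_insert, Finset.mem_singleton] at hv
      rcases hv with rfl | rfl | rfl
      · exact (hmemx v).2 hxy
      · exact (hmemx _).2 haxw1
      · exact (hmemx _).2 haxw2
    have hc3 : ({y, w₁, w₂} : Finset V).card = 3 := by
      rw [Finset.card_insert_of_notMem, Finset.card_insert_of_notMem, Finset.card_singleton]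
      · simp [hw12]
      · simp [hyw1, hyw2]
    exact (Finset.eq_of_subset_of_card_le hsub (by rw [hcardx, hc3])).symm
  set S : Set ℝ :=
    {k : ℝ | ∃ f : V → ℝ, Lip1 G f ∧ grad G f y x = 1 ∧ k = grad G (lap G f) x y} with hS
  have hSne : S.Nonempty := by
    have hlip0 : Lip1 G (fun v => (G.dist v x : ℝ)) := by
      intro a b
      rw [abs_sub_le_iff]
      constructor
      · have h1 := hconn.dist_triangle (u := a) (v := b) (w := x)
        have h1' : (G.dist a x : ℝ) ≤ G.dist a b + G.dist b x := by exact_mod_cast h1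
        linarith
      · have h1 := hconn.dist_triangle (u := b) (v := a) (w := x)
        have h2 : (G.dist b x : ℝ) ≤ G.dist b a + G.dist a x := by exact_mod_cast h1
        have h3 : G.dist b a = G.dist a b := SimpleGraph.dist_comm
        rw [h3] at h2
        linarith
    have hgrad0 : grad G (fun v => (G.dist v x : ℝ)) y x = 1 := by
      simp only [grad, hdyx1, SimpleGraph.dist_self]
      norm_num
    exact ⟨_, _, hlip0, hgrad0, rfl⟩
  have hlb : ∀ k ∈ S, (1:ℝ)/30 ≤ k := by
    rintro k ⟨f, hlip, hgrad, rfl⟩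
    have hadjle : ∀ u v : V, G.Adj u v → |f u - f v| ≤ 1 := by
      intro u v huv
      have h1 := hlip u v
      rw [SimpleGraph.dist_eq_one_iff_adj.2 huv] at h1
      exact_mod_cast h1
    have hfy : f y = f x + 1 := by
      simp only [grad, hdyx1, Nat.cast_one, div_one] at hgrad
      linarith
    set a : ℝ := f w₁ - f x with ha
    set b : ℝ := f w₂ - f x with hb
    have ha1 : a ≤ 1 := by have h1 := abs_le.1 (hadjle w₁ x haxw1.symm); linarith [h1.2]
    have hb1 : b ≤ 1 := by have h1 := abs_le.1 (hadjle w₂ x haxw2.symm); linarith [h1.2]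
    have ha0 : 0 ≤ a := by
      have h1 := abs_le.1 (hadjle w₁ y hayw1.symm); rw [hfy] at h1; have := h1.1; linarith
    have hb0 : 0 ≤ b := by
      have h1 := abs_le.1 (hadjle w₂ y hayw2.symm); rw [hfy] at h1; have := h1.1; linarith
    have hlapx : lap G f x = (1 + a + b) / 3 := by
      rw [lap_eq G f x (hfin x), hdx, ← hsx, hsxeq]
      rw [Finset.sum_insert (by simp [hw12, hyw1, hyw2]),
        Finset.sum_insert (by simp [hw12]), Finset.sum_singleton]
      rw [hfy]; ring
    have hgradval : grad G (lap G f) x y = lap G f x - lap G f y := by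
      simp only [grad, hdxy1, Nat.cast_one, div_one]
    rcases eq_or_lt_of_le hdxy with hd3' | hd4
    · -- deg G y = 3
      have hd3 : deg G y = 3 := hd3'.symm
      have hsub : ({x, w₁, w₂} : Finset V) ⊆ sy := by
        intro v hv
        simp only [Finset.mem_insert, Finset.mem_singleton] at hv
        rcases hv with rfl | rfl | rfl
        · exact (hmemy v).2 hxy.symm
        · exact (hmemy _).2 hayw1
        · exact (hmemy _).2 hayw2
      have hc3 : ({x, w₁, w₂} : Finset V).card = 3 := by
        rw [Finset.card_insert_of_notMem, Finset.card_insert_of_notMem,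
          Finset.card_singleton]
        · simp [hw12]
        · simp [hxw1, hxw2]
      have hsyeq : sy = {x, w₁, w₂} :=
        (Finset.eq_of_subset_of_card_le hsub (by rw [hcardy, hd3, hc3])).symm
      have hlapy : lap G f y = (a + b - 3) / 3 := by
        rw [lap_eq G f y (hfin y), hd3, ← hsy, hsyeq]
        rw [Finset.sum_insert (by simp [hxw1, hxw2]),
          Finset.sum_insert (by simp [hw12]), Finset.sum_singleton]
        rw [hfy]; ring
      rw [hgradval, hlapx, hlapy]; linarith
    · -- deg G y ≥ 4
      have hd4le : 4 ≤ deg G y := hd4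
      obtain ⟨u₂, hayu2, hu2n, u₁, hu1T, hau2u1⟩ := hu2 hd4le
      have hu2x : u₂ ≠ x := by intro h; exact hu2n (by simp [h])
      have hu2nx : u₂ ∉ G.neighborSet x := fun h => hu2n (Set.mem_union_left _ h)
      have hu2w1 : u₂ ≠ w₁ := by rintro rfl; exact hu2nx hw1.1
      have hu2w2 : u₂ ≠ w₂ := by rintro rfl; exact hu2nx hw2.1
      have hu1val : f u₁ - f x = a ∨ f u₁ - f x = b := by
        have h1 : u₁ ∈ ({w₁, w₂} : Set V) := hTeq ▸ hu1T
        rcases h1 with rfl | h1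
        · exact Or.inl rfl
        · rcases h1 with rfl; exact Or.inr rfl
      have hu2bound : f u₂ - f y ≤ f u₁ - f x := by
        have h1 := abs_le.1 (hadjle u₂ u₁ hau2u1)
        rw [hfy]; linarith [h1.2]
      set base : Finset V := {x, w₁, w₂, u₂} with hbase
      have hsub : base ⊆ sy := by
        intro v hv
        simp only [hbase, Finset.mem_insert, Finset.mem_singleton] at hv
        rcases hv with rfl | rfl | rfl | rfl
        · exact (hmemy v).2 hxy.symm
        · exact (hmemy _).2 hayw1
        · exact (hmemy _).2 hayw2
        · exact (hmemy _).2 hayu2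
      have hcbase : base.card = 4 := by
        rw [hbase, Finset.card_insert_of_notMem, Finset.card_insert_of_notMem,
          Finset.card_insert_of_notMem, Finset.card_singleton]
        · simp [hu2w2.symm]
        · simp [hw12, hu2w1.symm]
        · simp [hxw1, hxw2, hu2x.symm]
      have hbasesum : ∑ v ∈ base, (f v - f y)
          = (f x - f y) + (a - 1) + (b - 1) + (f u₂ - f y) := by
        rw [hbase, Finset.sum_insert (by simp [hxw1, hxw2, hu2x.symm]),
          Finset.sum_insert (by simp [hw12, hu2w1.symm]),
          Finset.sum_insert (by simp [hu2w2.symm]), Finset.sum_singleton]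
        rw [hfy]; ring
      have hcast : ((deg G y - 4 : ℕ) : ℝ) = (deg G y : ℝ) - 4 := by
        rw [Nat.cast_sub hd4le]; norm_num
      have hrest : ∑ v ∈ sy \ base, (f v - f y) ≤ (deg G y : ℝ) - 4 := by
        have hcard' : (sy \ base).card = deg G y - 4 := by
          rw [Finset.card_sdiff_of_subset hsub, hcbase, hcardy]
        calc ∑ v ∈ sy \ base, (f v - f y) ≤ ∑ v ∈ sy \ base, (1:ℝ) := by
              apply Finset.sum_le_sum
              intro v hv
              have hvy : G.Adj y v := (hmemy v).1 (Finset.mem_sdiff.1 hv).1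
              have h1 := abs_le.1 (hadjle v y hvy.symm)
              linarith [h1.2]
          _ = ((deg G y - 4 : ℕ) : ℝ) := by rw [Finset.sum_const, hcard']; simp
          _ = (deg G y : ℝ) - 4 := hcast
      have hsumy : ∑ v ∈ sy, (f v - f y)
          ≤ (f u₁ - f x) + a + b + ((deg G y : ℝ) - 7) := by
        rw [← Finset.sum_sdiff hsub, hbasesum]
        have hfxy : f x - f y = -1 := by rw [hfy]; ring
        rw [hfxy]
        linarith [hrest, hu2bound]
      have hlapy : lap G f y ≤ ((f u₁ - f x) + a + b + ((deg G y : ℝ) - 7)) / (deg G y : ℝ) := by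
        rw [lap_eq G f y (hfin y), ← hsy]
        calc (1 / (deg G y : ℝ)) * ∑ v ∈ sy, (f v - f y)
            ≤ (1 / (deg G y : ℝ)) * ((f u₁ - f x) + a + b + ((deg G y : ℝ) - 7)) := by
              apply mul_le_mul_of_nonneg_left hsumy
              positivity
          _ = _ := one_div_mul_eq_div _ _
      have hD4 : (4:ℝ) ≤ (deg G y : ℝ) := by exact_mod_cast hd4le
      have hD10 : (deg G y : ℝ) ≤ 10 := by exact_mod_cast hdy
      have harith := arith_aux a b (f u₁ - f x) (deg G y : ℝ) ha0 ha1 hb0 hb1 hu1val hD4 hD10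
      rw [hgradval, hlapx]
      linarith [hlapy, harith]
  have hge : (1:ℝ)/30 ≤ sInf S := le_csInf hSne hlb
  have hk : kappa G x y = sInf S := rfl
  rw [hk]
  linarith
end

section
/- Let G be a connected locally finite simple graph, let v₀ be a vertex of degree 2 whose two (distinct) neighbors v₁ and v₃ are non-adjacent in G, and suppose there is a vertex v₂ adjacent to both v₁ and v₃ (so v₀v₁v₂v₃v₀ is a 4-cycle in G). Let G' be the graph obtained from G by suppressing v₀, i.e., G' = (G − v₀) + v₁v₃ (delete v₀ and add the edge v₁v₃). Then for every edge xy of G' with {x,y} ≠ {v₁,v₃}, one has κ_{G'}(x,y) ≥ κ_G(x,y). -/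
open scoped BigOperators

namespace LLY

/-- The graph obtained from `G` by suppressing the vertex `v₀`: delete `v₀` and add
the edge `v₁v₃` (i.e. `G' = (G - v₀) + v₁v₃`), realized on the vertex set `{v // v ≠ v₀}`. -/
def suppress {V : Type*} (G : SimpleGraph V) (v₀ v₁ v₃ : V)
    (hv₁ : v₁ ≠ v₀) (hv₃ : v₃ ≠ v₀) : SimpleGraph {v : V // v ≠ v₀} :=
  SimpleGraph.comap Subtype.val G ⊔
    SimpleGraph.fromEdgeSet {s(⟨v₁, hv₁⟩, ⟨v₃, hv₃⟩)}

end LLY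

namespace LLYAux
open LLY SimpleGraph
open scoped Classical

variable {V : Type*} {G : SimpleGraph V} {v₀ v₁ v₃ : V} {hv₁ : v₁ ≠ v₀} {hv₃ : v₃ ≠ v₀}

lemma suppress_adj {a b : {v : V // v ≠ v₀}} :
    (suppress G v₀ v₁ v₃ hv₁ hv₃).Adj a b ↔
      G.Adj a.val b.val ∨
        (((a.val = v₁ ∧ b.val = v₃) ∨ (a.val = v₃ ∧ b.val = v₁)) ∧ a ≠ b) := by
  simp only [suppress, sup_adj, comap_adj, fromEdgeSet_adj, Set.mem_singleton_iff,
    Sym2.eq_iff, Subtype.ext_iff]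

lemma suppress_comm :
    suppress G v₀ v₁ v₃ hv₁ hv₃ = suppress G v₀ v₃ v₁ hv₃ hv₁ := by
  unfold suppress
  rw [Sym2.eq_swap]

lemma pair_adj (h13 : v₁ ≠ v₃) {a w : V} (ha : a ≠ v₀) (hw : w ≠ v₀)
    (ha13 : a = v₁ ∨ a = v₃) (hw13 : w = v₁ ∨ w = v₃) (haw : a ≠ w) :
    (suppress G v₀ v₁ v₃ hv₁ hv₃).Adj ⟨a, ha⟩ ⟨w, hw⟩ := by
  rw [suppress_adj]
  refine Or.inr ⟨?_, by simp [Subtype.ext_iff, haw]⟩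
  rcases ha13 with rfl | rfl <;> rcases hw13 with rfl | rfl <;> tauto

lemma walk_push (hN : G.neighborSet v₀ = {v₁, v₃}) (h13 : v₁ ≠ v₃)
    {w : V} (hw : w ≠ v₀) (hw13 : w = v₁ ∨ w = v₃) :
    ∀ (n : ℕ) {a b : V} (ha : a ≠ v₀) (p : G.Walk a b), p.length ≤ n →
      (∀ (hb : b ≠ v₀), ∃ q : (suppress G v₀ v₁ v₃ hv₁ hv₃).Walk ⟨a, ha⟩ ⟨b, hb⟩,
          q.length ≤ p.length) ∧
      (b = v₀ → ∃ q : (suppress G v₀ v₁ v₃ hv₁ hv₃).Walk ⟨a, ha⟩ ⟨w, hw⟩,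
          q.length ≤ p.length) := by
  have hmem : ∀ {z : V}, G.Adj z v₀ → z = v₁ ∨ z = v₃ := by
    intro z hz
    have : z ∈ G.neighborSet v₀ := hz.symm
    rw [hN] at this
    simpa using this
  intro n
  induction n with
  | zero =>
    intro a b ha p hp
    cases p with
    | nil => exact ⟨fun hb => ⟨Walk.nil, le_rfl⟩, fun h => absurd h ha⟩
    | cons h r => simp at hp
  | succ m ih =>
    intro a b ha p hp
    cases p with
    | nil => exact ⟨fun hb => ⟨Walk.nil, le_rfl⟩, fun h => absurd h ha⟩
    | @cons _ c _ h r =>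
      by_cases hc : c = v₀
      · have h0 : G.Adj a v₀ := hc ▸ h
        have ha13 : a = v₁ ∨ a = v₃ := hmem h0
        cases r with
        | nil =>
          refine ⟨fun hb => absurd hc hb, fun _ => ?_⟩
          by_cases haw : a = w
          · subst haw; exact ⟨Walk.nil, by simp⟩
          · exact ⟨Walk.cons (pair_adj h13 ha hw ha13 hw13 haw) Walk.nil, by simp⟩
        | @cons _ c' _ h2 r' =>
          have h2' : G.Adj v₀ c' := hc ▸ h2
          have hc' : c' ≠ v₀ := h2'.ne'
          have hc'13 : c' = v₁ ∨ c' = v₃ := hmem h2'.symm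
          have hr' : r'.length ≤ m := by
            simp only [Walk.length_cons] at hp; omega
          obtain ⟨seg, hseg⟩ : ∃ s : (suppress G v₀ v₁ v₃ hv₁ hv₃).Walk ⟨a, ha⟩ ⟨c', hc'⟩,
              s.length ≤ 1 := by
            by_cases hac : a = c'
            · subst hac; exact ⟨Walk.nil, by simp⟩
            · exact ⟨Walk.cons (pair_adj h13 ha hc' ha13 hc'13 hac) Walk.nil, by simp⟩
          have IH := ih hc' r' hr'
          constructor
          · intro hb
            obtain ⟨q, hq⟩ := IH.1 hb
            exact ⟨seg.append q, by simp only [Walk.length_append, Walk.length_cons]; omega⟩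
          · intro hb
            obtain ⟨q, hq⟩ := IH.2 hb
            exact ⟨seg.append q, by simp only [Walk.length_append, Walk.length_cons]; omega⟩
      · have hadj : (suppress G v₀ v₁ v₃ hv₁ hv₃).Adj ⟨a, ha⟩ ⟨c, hc⟩ :=
          suppress_adj.mpr (Or.inl h)
        have hr : r.length ≤ m := by simp only [Walk.length_cons] at hp; omega
        have IH := ih hc r hr
        constructor
        · intro hb
          obtain ⟨q, hq⟩ := IH.1 hb
          exact ⟨Walk.cons hadj q, by simp only [Walk.length_cons]; omega⟩
        · intro hb
          obtain ⟨q, hq⟩ := IH.2 hb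
          exact ⟨Walk.cons hadj q, by simp only [Walk.length_cons]; omega⟩

lemma dist_push (hconn : G.Connected) (hN : G.neighborSet v₀ = {v₁, v₃}) (h13 : v₁ ≠ v₃)
    {a b : V} (ha : a ≠ v₀) (hb : b ≠ v₀) :
    (suppress G v₀ v₁ v₃ hv₁ hv₃).dist ⟨a, ha⟩ ⟨b, hb⟩ ≤ G.dist a b := by
  obtain ⟨p, hp⟩ := hconn.exists_walk_length_eq_dist a b
  obtain ⟨q, hq⟩ := (walk_push (hv₁ := hv₁) (hv₃ := hv₃) hN h13 hv₁ (Or.inl rfl)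
    p.length ha p le_rfl).1 hb
  calc (suppress G v₀ v₁ v₃ hv₁ hv₃).dist ⟨a, ha⟩ ⟨b, hb⟩ ≤ q.length :=
        SimpleGraph.dist_le q
    _ ≤ p.length := hq
    _ = G.dist a b := hp

lemma dist_push₀ (hconn : G.Connected) (hN : G.neighborSet v₀ = {v₁, v₃}) (h13 : v₁ ≠ v₃)
    {a w : V} (ha : a ≠ v₀) (hw : w ≠ v₀) (hw13 : w = v₁ ∨ w = v₃) :
    (suppress G v₀ v₁ v₃ hv₁ hv₃).dist ⟨a, ha⟩ ⟨w, hw⟩ ≤ G.dist a v₀ := by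
  obtain ⟨p, hp⟩ := hconn.exists_walk_length_eq_dist a v₀
  obtain ⟨q, hq⟩ := (walk_push (hv₁ := hv₁) (hv₃ := hv₃) hN h13 hw hw13
    p.length ha p le_rfl).2 rfl
  calc (suppress G v₀ v₁ v₃ hv₁ hv₃).dist ⟨a, ha⟩ ⟨w, hw⟩ ≤ q.length :=
        SimpleGraph.dist_le q
    _ ≤ p.length := hq
    _ = G.dist a v₀ := hp

lemma suppress_connected (hconn : G.Connected) (hN : G.neighborSet v₀ = {v₁, v₃})
    (h13 : v₁ ≠ v₃) : (suppress G v₀ v₁ v₃ hv₁ hv₃).Connected := by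
  rw [SimpleGraph.connected_iff]
  refine ⟨fun a b => ?_, ⟨⟨v₁, hv₁⟩⟩⟩
  obtain ⟨p⟩ := hconn.preconnected a.val b.val
  obtain ⟨q, _⟩ := (walk_push (hv₁ := hv₁) (hv₃ := hv₃) hN h13 hv₁ (Or.inl rfl)
    p.length a.2 p le_rfl).1 b.2
  exact ⟨q⟩

/-- Transporting a Laplacian through a neighborhood bijection. -/
lemma lap_transport {W : Type*} {H : SimpleGraph W} {f : V → ℝ} {f' : W → ℝ}
    {u : V} {u' : W} (g : W → V)
    (himg : G.neighborSet u = g '' H.neighborSet u')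
    (hinj : Set.InjOn g (H.neighborSet u'))
    (hf : ∀ v ∈ H.neighborSet u', f (g v) = f' v) (hfu : f u = f' u') :
    lap G f u = lap H f' u' := by
  unfold lap deg
  rw [himg, Nat.card_coe_set_eq, Nat.card_coe_set_eq,
    Set.ncard_image_of_injOn hinj, finsum_mem_image hinj]
  congr 1
  exact finsum_mem_congr rfl fun v hv => by rw [hf v hv, hfu]

lemma lap_abs_le {f : V → ℝ} (hfin : LocFin G) (hf : Lip1 G f) (u : V) :
    |lap G f u| ≤ 1 := by
  have hs := hfin u
  have hb : ∀ v ∈ G.neighborSet u, |f v - f u| ≤ 1 := by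
    intro v hv
    have h1 : G.dist v u ≤ 1 := SimpleGraph.dist_le (Walk.cons hv.symm Walk.nil)
    calc |f v - f u| ≤ (G.dist v u : ℝ) := hf v u
      _ ≤ 1 := by exact_mod_cast h1
  by_cases hd : deg G u = 0
  · unfold lap
    rw [hd]
    simp
  · have hdpos : (0 : ℝ) < (deg G u : ℝ) := by
      exact_mod_cast Nat.pos_of_ne_zero hd
    have hcard : ((deg G u : ℕ) : ℝ) = (hs.toFinset.card : ℝ) := by
      unfold deg
      rw [Nat.card_coe_set_eq, Set.ncard_eq_toFinset_card _ hs]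
    have hsum : |∑ v ∈ hs.toFinset, (f v - f u)| ≤ (deg G u : ℝ) := by
      calc |∑ v ∈ hs.toFinset, (f v - f u)| ≤ ∑ v ∈ hs.toFinset, |f v - f u| :=
            Finset.abs_sum_le_sum_abs _ _
        _ ≤ ∑ _v ∈ hs.toFinset, (1 : ℝ) :=
            Finset.sum_le_sum fun v hv => hb v (hs.mem_toFinset.mp hv)
        _ = (hs.toFinset.card : ℝ) := by simp
        _ = (deg G u : ℝ) := hcard.symm
    unfold lap
    rw [finsum_mem_eq_finite_toFinset_sum _ hs, abs_mul,
      abs_of_pos (by positivity : (0 : ℝ) < 1 / (deg G u : ℝ))]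
    calc (1 / (deg G u : ℝ)) * |∑ v ∈ hs.toFinset, (f v - f u)|
        ≤ (1 / (deg G u : ℝ)) * (deg G u : ℝ) := by
          exact mul_le_mul_of_nonneg_left hsum (by positivity)
      _ = 1 := by field_simp

lemma inj_g {t : V} :
    Function.Injective (fun v : {v : V // v ≠ v₀} => if v.val = t then v₀ else v.val) := by
  intro v v' h
  replace h : (if v.val = t then v₀ else v.val) = (if v'.val = t then v₀ else v'.val) := h
  by_cases h1 : v.val = t <;> by_cases h2 : v'.val = t
  · exact Subtype.ext (h1.trans h2.symm)
  · rw [if_pos h1, if_neg h2] at h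
    exact absurd h.symm v'.2
  · rw [if_neg h1, if_pos h2] at h
    exact absurd h v.2
  · rw [if_neg h1, if_neg h2] at h
    exact Subtype.ext h

lemma nbhd_generic (hN : G.neighborSet v₀ = {v₁, v₃}) {u : V}
    (hu : u ≠ v₀) (h1 : u ≠ v₁) (h3 : u ≠ v₃) :
    G.neighborSet u =
      Subtype.val '' (suppress G v₀ v₁ v₃ hv₁ hv₃).neighborSet ⟨u, hu⟩ := by
  ext z
  simp only [Set.mem_image, mem_neighborSet]
  constructor
  · intro hz
    have hz0 : z ≠ v₀ := by
      intro e
      have hu0 : u ∈ G.neighborSet v₀ := (e ▸ hz).symm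
      rw [hN] at hu0
      rcases hu0 with e | e
      · exact h1 e
      · exact h3 e
    exact ⟨⟨z, hz0⟩, suppress_adj.mpr (Or.inl hz), rfl⟩
  · rintro ⟨v, hv, rfl⟩
    rcases suppress_adj.mp hv with h | ⟨hp, _⟩
    · exact h
    · rcases hp with ⟨e, _⟩ | ⟨e, _⟩
      · exact absurd e h1
      · exact absurd e h3

lemma nbhd_v1 (hN : G.neighborSet v₀ = {v₁, v₃}) (h13 : v₁ ≠ v₃)
    (hnadj : ¬ G.Adj v₁ v₃) (h01 : G.Adj v₀ v₁) :
    G.neighborSet v₁ =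
      (fun v : {v : V // v ≠ v₀} => if v.val = v₃ then v₀ else v.val) ''
        (suppress G v₀ v₁ v₃ hv₁ hv₃).neighborSet ⟨v₁, hv₁⟩ := by
  ext z
  simp only [Set.mem_image, mem_neighborSet]
  constructor
  · intro hz
    by_cases hz0 : z = v₀
    · refine ⟨⟨v₃, hv₃⟩, ?_, by simp [hz0]⟩
      exact suppress_adj.mpr (Or.inr ⟨Or.inl ⟨rfl, rfl⟩, by simp [Subtype.ext_iff, h13]⟩)
    · have hz3 : z ≠ v₃ := fun e => hnadj (e ▸ hz)
      exact ⟨⟨z, hz0⟩, suppress_adj.mpr (Or.inl hz), by simp [hz3]⟩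
  · rintro ⟨v, hv, rfl⟩
    rcases suppress_adj.mp hv with h | ⟨hp, hne⟩
    · have hv3 : v.val ≠ v₃ := fun e => hnadj (e ▸ h)
      simpa [hv3] using h
    · rcases hp with ⟨e1, e3⟩ | ⟨e1, e3⟩
      · simpa [e3] using h01.symm
      · exact absurd e1 h13

lemma nbhd_v3 (hN : G.neighborSet v₀ = {v₁, v₃}) (h13 : v₁ ≠ v₃)
    (hnadj : ¬ G.Adj v₁ v₃) (h03 : G.Adj v₀ v₃) :
    G.neighborSet v₃ =
      (fun v : {v : V // v ≠ v₀} => if v.val = v₁ then v₀ else v.val) ''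
        (suppress G v₀ v₁ v₃ hv₁ hv₃).neighborSet ⟨v₃, hv₃⟩ := by
  rw [suppress_comm]
  exact nbhd_v1 (hv₁ := hv₃) (hv₃ := hv₁) (by rw [hN, Set.pair_comm]) h13.symm
    (fun h => hnadj h.symm) h03

end LLYAux

open LLY in
/-- **Lemma 6.** Let `v₀` be a degree-2 vertex of `G` whose two distinct,
non-adjacent neighbors `v₁, v₃` have a common neighbor `v₂ ≠ v₀` (so `v₀v₁v₂v₃v₀` is a
4-cycle). Let `G'` be obtained by suppressing `v₀`. Then every edge `xy` of `G'` other
than `v₁v₃` satisfies `κ_{G'}(x,y) ≥ κ_G(x,y)`. -/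
theorem curv_suppress {V : Type*} (G : SimpleGraph V)
    (hconn : G.Connected) (hfin : LocFin G) (v₀ v₁ v₂ v₃ : V)
    (hv₁ : v₁ ≠ v₀) (hv₃ : v₃ ≠ v₀) (hv₂ : v₂ ≠ v₀)
    (hdeg : deg G v₀ = 2) (h13 : v₁ ≠ v₃)
    (h01 : G.Adj v₀ v₁) (h03 : G.Adj v₀ v₃) (hnadj : ¬ G.Adj v₁ v₃)
    (h12 : G.Adj v₁ v₂) (h23 : G.Adj v₂ v₃) :
    ∀ x y : {v : V // v ≠ v₀},
      (suppress G v₀ v₁ v₃ hv₁ hv₃).Adj x y →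
      ({x.val, y.val} : Set V) ≠ {v₁, v₃} →
      kappa (suppress G v₀ v₁ v₃ hv₁ hv₃) x y ≥ kappa G x.val y.val := by
  classical
  intro x y hxy hne
  -- neighborhood of v₀
  have hN : G.neighborSet v₀ = {v₁, v₃} := by
    have hsub : ({v₁, v₃} : Set V) ⊆ G.neighborSet v₀ := by
      rintro z hz
      rcases hz with rfl | rfl
      · exact h01
      · exact h03
    refine (Set.eq_of_subset_of_ncard_le hsub ?_ (hfin v₀)).symm
    rw [Set.ncard_pair h13, ← Nat.card_coe_set_eq]
    exact le_of_eq hdeg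
  have hconn' := LLYAux.suppress_connected (hv₁ := hv₁) (hv₃ := hv₃) hconn hN h13
  -- x y adjacent in G
  have hxyG : G.Adj x.val y.val := by
    rcases LLYAux.suppress_adj.mp hxy with h | ⟨hp, _⟩
    · exact h
    · exfalso
      apply hne
      rcases hp with ⟨e1, e2⟩ | ⟨e1, e2⟩
      · rw [e1, e2]
      · rw [e1, e2, Set.pair_comm]
  have hdxy : G.dist x.val y.val = 1 := SimpleGraph.dist_eq_one_iff_adj.mpr hxyG
  have hdyx : G.dist y.val x.val = 1 := SimpleGraph.dist_eq_one_iff_adj.mpr hxyG.symm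
  have hdxy' : (suppress G v₀ v₁ v₃ hv₁ hv₃).dist x y = 1 := SimpleGraph.dist_eq_one_iff_adj.mpr hxy
  have hdyx' : (suppress G v₀ v₁ v₃ hv₁ hv₃).dist y x = 1 := SimpleGraph.dist_eq_one_iff_adj.mpr hxy.symm
  rw [ge_iff_le]
  unfold kappa
  apply csInf_le_csInf
  · -- bddBelow
    refine ⟨-2, ?_⟩
    rintro k ⟨f, hLip, -, rfl⟩
    have h1 := LLYAux.lap_abs_le hfin hLip x.val
    have h2 := LLYAux.lap_abs_le hfin hLip y.val
    rw [abs_le] at h1 h2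
    unfold grad
    rw [hdxy]
    push_cast
    rw [div_one]
    linarith [h1.1, h2.2]
  · -- nonempty
    refine ⟨_, fun v => -(((suppress G v₀ v₁ v₃ hv₁ hv₃).dist v y : ℕ) : ℝ), ?_, ?_, rfl⟩
    · intro a b
      have t1 := hconn'.dist_triangle (u := a) (v := b) (w := y)
      have t2 := hconn'.dist_triangle (u := b) (v := a) (w := y)
      have hsymm : (suppress G v₀ v₁ v₃ hv₁ hv₃).dist b a =
          (suppress G v₀ v₁ v₃ hv₁ hv₃).dist a b := SimpleGraph.dist_comm
      rw [hsymm] at t2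
      have t1' : (((suppress G v₀ v₁ v₃ hv₁ hv₃).dist a y : ℕ) : ℝ) ≤
          (((suppress G v₀ v₁ v₃ hv₁ hv₃).dist a b : ℕ) : ℝ) +
          (((suppress G v₀ v₁ v₃ hv₁ hv₃).dist b y : ℕ) : ℝ) := by exact_mod_cast t1
      have t2' : (((suppress G v₀ v₁ v₃ hv₁ hv₃).dist b y : ℕ) : ℝ) ≤
          (((suppress G v₀ v₁ v₃ hv₁ hv₃).dist a b : ℕ) : ℝ) +
          (((suppress G v₀ v₁ v₃ hv₁ hv₃).dist a y : ℕ) : ℝ) := by exact_mod_cast t2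
      show |(-(((suppress G v₀ v₁ v₃ hv₁ hv₃).dist a y : ℕ) : ℝ)) -
          (-(((suppress G v₀ v₁ v₃ hv₁ hv₃).dist b y : ℕ) : ℝ))| ≤ _
      rw [abs_le]
      constructor
      · linarith
      · linarith
    · unfold grad
      show ((-(((suppress G v₀ v₁ v₃ hv₁ hv₃).dist y y : ℕ) : ℝ)) -
          (-(((suppress G v₀ v₁ v₃ hv₁ hv₃).dist x y : ℕ) : ℝ))) / _ = 1
      rw [SimpleGraph.dist_self, hdxy', hdyx']
      norm_num
  · -- subset : every competitor for G′ gives one for G with the same value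
    rintro k ⟨f', hLip', hgrad', rfl⟩
    obtain ⟨wv, hwv, hwv13, hwv1, hwv3⟩ :
        ∃ (wv : V) (hwv : wv ≠ v₀), (wv = v₁ ∨ wv = v₃) ∧
          ((x.val = v₁ ∨ y.val = v₁) → wv = v₃) ∧
          ((x.val = v₃ ∨ y.val = v₃) → wv = v₁) := by
      by_cases hcase : x.val = v₃ ∨ y.val = v₃
      · refine ⟨v₁, hv₁, Or.inl rfl, ?_, fun _ => rfl⟩
        intro h1
        exfalso
        rcases hcase with e3 | e3 <;> rcases h1 with e1 | e1
        · exact h13 (e1.symm.trans e3)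
        · exact hne (by rw [e3, e1, Set.pair_comm])
        · exact hne (by rw [e1, e3])
        · exact h13 (e1.symm.trans e3)
      · refine ⟨v₃, hv₃, Or.inr rfl, fun _ => rfl, ?_⟩
        intro h3
        exact absurd h3 hcase
    set f : V → ℝ := fun z => if hz : z = v₀ then f' ⟨wv, hwv⟩ else f' ⟨z, hz⟩ with hfdef
    have hfval : ∀ (z : V) (hz : z ≠ v₀), f z = f' ⟨z, hz⟩ := by
      intro z hz
      simp only [hfdef]
      exact dif_neg hz
    have hfv₀ : f v₀ = f' ⟨wv, hwv⟩ := by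
      simp [hfdef]
    refine ⟨f, ?_, ?_, ?_⟩
    · -- Lipschitz
      intro a b
      by_cases haz : a = v₀ <;> by_cases hbz : b = v₀
      · rw [haz, hbz]
        simp only [sub_self, abs_zero]
        positivity
      · rw [haz]
        calc |f v₀ - f b| = |f' ⟨b, hbz⟩ - f' ⟨wv, hwv⟩| := by
              rw [hfv₀, hfval b hbz, abs_sub_comm]
          _ ≤ (((suppress G v₀ v₁ v₃ hv₁ hv₃).dist ⟨b, hbz⟩ ⟨wv, hwv⟩ : ℕ) : ℝ) := hLip' _ _
          _ ≤ ((G.dist b v₀ : ℕ) : ℝ) := by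
              exact_mod_cast LLYAux.dist_push₀ hconn hN h13 hbz hwv hwv13
          _ = ((G.dist v₀ b : ℕ) : ℝ) := by
              norm_cast
              exact SimpleGraph.dist_comm
      · rw [hbz]
        calc |f a - f v₀| = |f' ⟨a, haz⟩ - f' ⟨wv, hwv⟩| := by
              rw [hfv₀, hfval a haz]
          _ ≤ (((suppress G v₀ v₁ v₃ hv₁ hv₃).dist ⟨a, haz⟩ ⟨wv, hwv⟩ : ℕ) : ℝ) := hLip' _ _
          _ ≤ ((G.dist a v₀ : ℕ) : ℝ) := by
              exact_mod_cast LLYAux.dist_push₀ hconn hN h13 haz hwv hwv13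
      · calc |f a - f b| = |f' ⟨a, haz⟩ - f' ⟨b, hbz⟩| := by
              rw [hfval a haz, hfval b hbz]
          _ ≤ (((suppress G v₀ v₁ v₃ hv₁ hv₃).dist ⟨a, haz⟩ ⟨b, hbz⟩ : ℕ) : ℝ) := hLip' _ _
          _ ≤ ((G.dist a b : ℕ) : ℝ) := by
              exact_mod_cast LLYAux.dist_push hconn hN h13 haz hbz
    · -- gradient
      have hx : f x.val = f' x := hfval x.val x.2
      have hy : f y.val = f' y := hfval y.val y.2
      unfold grad
      rw [hdyx, hx, hy]
      unfold grad at hgrad'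
      rw [hdyx'] at hgrad'
      exact_mod_cast hgrad'
    · -- equal value
      have key : ∀ u : {v : V // v ≠ v₀}, u = x ∨ u = y →
          lap G f u.val = lap (suppress G v₀ v₁ v₃ hv₁ hv₃) f' u := by
        intro u hu
        by_cases hu1 : u.val = v₁
        · have hwve : wv = v₃ := by
            apply hwv1
            rcases hu with rfl | rfl
            · exact Or.inl hu1
            · exact Or.inr hu1
          have hcv3 : f v₀ = f' ⟨v₃, hv₃⟩ := by
            rw [hfv₀]
            congr 1
            exact Subtype.ext hwve
          have hueq : u = ⟨v₁, hv₁⟩ := Subtype.ext hu1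
          rw [hueq]
          refine LLYAux.lap_transport _ (LLYAux.nbhd_v1 hN h13 hnadj h01) (LLYAux.inj_g.injOn) ?_ (hfval v₁ hv₁)
          intro v hv
          show f (if v.val = v₃ then v₀ else v.val) = f' v
          by_cases h3 : v.val = v₃
          · have hveq : v = ⟨v₃, hv₃⟩ := Subtype.ext h3
            rw [if_pos h3, hcv3, hveq]
          · rw [if_neg h3]
            exact hfval v.val v.2
        · by_cases hu3 : u.val = v₃
          · have hwve : wv = v₁ := by
              apply hwv3
              rcases hu with rfl | rfl
              · exact Or.inl hu3
              · exact Or.inr hu3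
            have hcv1 : f v₀ = f' ⟨v₁, hv₁⟩ := by
              rw [hfv₀]
              congr 1
              exact Subtype.ext hwve
            have hueq : u = ⟨v₃, hv₃⟩ := Subtype.ext hu3
            rw [hueq]
            refine LLYAux.lap_transport _ (LLYAux.nbhd_v3 hN h13 hnadj h03) (LLYAux.inj_g.injOn) ?_ (hfval v₃ hv₃)
            intro v hv
            show f (if v.val = v₁ then v₀ else v.val) = f' v
            by_cases h1 : v.val = v₁
            · have hveq : v = ⟨v₁, hv₁⟩ := Subtype.ext h1
              rw [if_pos h1, hcv1, hveq]
            · rw [if_neg h1]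
              exact hfval v.val v.2
          · refine LLYAux.lap_transport _ (LLYAux.nbhd_generic hN u.2 hu1 hu3)
              (Subtype.val_injective.injOn) ?_ (hfval u.val u.2)
            intro v hv
            exact hfval v.val v.2
      unfold grad
      rw [hdxy, hdxy', key x (Or.inl rfl), key y (Or.inr rfl)]
end

section
/- Let G be a connected locally finite simple graph, let x and y be adjacent vertices with d(x) ≤ d(y), and let σ be a coupling between μ_x and μ_y. Define B_σ : V(G) × V(G) → ℝ by B_σ(x,y) = 1 + 1/d(y); B_σ(u,u) = −1/d(y) for every u ∈ N[x] ∩ N[y] ; B_σ(u,v) = −σ(u,v)/L for every (u,v) ∈ N[x] × (N(y) \ N[x]); and B_σ(u,v) = 0 otherwise, where L = lcm(d(x), d(y)). Then B_σ is a *-coupling between m_x^0 and m_y^0. -/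
open scoped BigOperators

namespace LLY

variable {V : Type*}

open Classical in
/-- The idleness-0 random walk distribution at `x`: `m_x^0(u) = 1/d(x)` on `N(x)`. -/
noncomputable def m0 (G : SimpleGraph V) (x u : V) : ℝ :=
  if u ∈ G.neighborSet x then 1 / (deg G x : ℝ) else 0

/-- `B` is a `*`-coupling between `m_x^0` and `m_y^0`. -/
def IsStarCoupling (G : SimpleGraph V) (x y : V) (B : V × V → ℝ) : Prop :=
  (Function.support B).Finite ∧
  0 < B (x, y) ∧
  (∀ p : V × V, p ≠ (x, y) → B p ≤ 0) ∧
  (∑ᶠ p : V × V, B p) = 0 ∧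
  (∀ u : V, u ≠ x → ∑ᶠ v : V, B (u, v) = - m0 G x u) ∧
  (∀ v : V, v ≠ y → ∑ᶠ u : V, B (u, v) = - m0 G y v)

end LLY

namespace LLY

open Classical in
/-- The map `B_σ` built from a coupling `σ` between `μ_x` and `μ_y`:
`B_σ(x,y) = 1 + 1/d(y)`; `B_σ(u,u) = -1/d(y)` for `u ∈ N[x] ∩ N[y]`;
`B_σ(u,v) = -σ(u,v)/lcm(d(x),d(y))` for `(u,v) ∈ N[x] × (N(y) \ N[x])`; `0` otherwise. -/
noncomputable def Bsig {V : Type*} (G : SimpleGraph V) (x y : V) (σ : V × V → ℤ) :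
    V × V → ℝ := fun p =>
  if p = (x, y) then 1 + 1 / (deg G y : ℝ)
  else if p.1 = p.2 ∧ p.1 ∈ (G.neighborSet x ∪ {x}) ∩ (G.neighborSet y ∪ {y}) then
    -(1 / (deg G y : ℝ))
  else if p.1 ∈ G.neighborSet x ∪ {x} ∧ p.2 ∈ G.neighborSet y \ (G.neighborSet x ∪ {x}) then
    -((σ p : ℝ) / (Nat.lcm (deg G x) (deg G y) : ℝ))
  else 0

end LLY

/-!
Since `σ ≥ 0`, each entry of `σ` is bounded by its row and column marginals, so `σ` lives on
`N(x) × (N(y) \ N[x])`. There the truncation in `B_σ` is invisible, and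
`B_σ = (1 + 1/d(y)) δ_(x,y) - (1/d(y)) 1_{u = v ∈ N[x] ∩ N[y]} - σ / L`.
The marginals of `B_σ` are therefore explicit, and `c_x / L = 1/d(x)`, `c_y / L = 1/d(y)` turn
them into `-m_x^0` and `-m_y^0` away from `x` and `y`. The row through `x` sums to `1`, which
makes the total mass `1 - ∑ m_x^0 = 0`.
-/

open Function

namespace LLY

variable {V : Type*} {G : SimpleGraph V} {x y : V} {σ : V × V → ℤ}

lemma deg_ne_zero_of_adj {u v : V} (hu : (G.neighborSet u).Finite) (huv : G.Adj u v) :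
    deg G u ≠ 0 :=
  have := hu.to_subtype
  Nat.card_ne_zero.mpr ⟨⟨⟨v, huv⟩⟩, inferInstance⟩

lemma finsum_m0 (hx : (G.neighborSet x).Finite) (hdx : deg G x ≠ 0) :
    ∑ᶠ u, m0 G x u = 1 := by
  classical
  rw [finsum_eq_finsetSum_of_support_subset _ (s := hx.toFinset) fun u hu => ?_]
  · have hm0 : ∀ u ∈ hx.toFinset, m0 G x u = 1 / deg G x :=
      fun u hu => if_pos (hx.mem_toFinset.mp hu)
    rw [Finset.sum_congr rfl hm0, Finset.sum_const, ← Nat.card_eq_card_finite_toFinset hx,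
      nsmul_eq_mul]
    exact mul_one_div_cancel (Nat.cast_ne_zero.mpr hdx)
  · by_contra h
    simp_all [m0]

lemma natCast_div_div_natCast_of_dvd {K : Type*} [Field K] [CharZero K] {a b : ℕ} (h : a ∣ b)
    (hb : b ≠ 0) : ((b / a : ℕ) : K) / b = 1 / a := by
  have ha : (a : K) ≠ 0 := Nat.cast_ne_zero.mpr (ne_zero_of_dvd_ne_zero hb h)
  rw [Nat.cast_div h ha]
  field_simp

lemma cX_div_lcm (hx : (G.neighborSet x).Finite) (hy : (G.neighborSet y).Finite)
    (hxy : G.Adj x y) : (cX G x y : ℝ) / Nat.lcm (deg G x) (deg G y) = 1 / deg G x :=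
  natCast_div_div_natCast_of_dvd (Nat.dvd_lcm_left _ _)
    (Nat.lcm_ne_zero (deg_ne_zero_of_adj hx hxy) (deg_ne_zero_of_adj hy hxy.symm))

lemma cY_div_lcm (hx : (G.neighborSet x).Finite) (hy : (G.neighborSet y).Finite)
    (hxy : G.Adj x y) : (cY G x y : ℝ) / Nat.lcm (deg G x) (deg G y) = 1 / deg G y :=
  natCast_div_div_natCast_of_dvd (Nat.dvd_lcm_right _ _)
    (Nat.lcm_ne_zero (deg_ne_zero_of_adj hx hxy) (deg_ne_zero_of_adj hy hxy.symm))

lemma muX_eq_zero_of_notMem (hxy : G.Adj x y) {u : V} (hu : u ∉ G.neighborSet x) :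
    muX G x y u = 0 := by
  have hy : y ∈ G.neighborSet x := hxy
  simp only [muX, Set.mem_inter_iff, Set.mem_sdiff]
  rw [if_neg (by rintro (rfl | ⟨h, -⟩) <;> contradiction),
    if_neg (by rintro ⟨h, -⟩; contradiction)]

lemma IsCoupling.le_muX (hσ : IsCoupling G x y σ) (u v : V) : σ (u, v) ≤ muX G x y u :=
  hσ.2.2.1 u ▸ single_le_finsum v (hσ.1.preimage (Prod.mk_right_injective u).injOn)
    fun w => hσ.2.1 (u, w)

lemma IsCoupling.le_muY (hσ : IsCoupling G x y σ) (u v : V) : σ (u, v) ≤ muY G x y v :=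
  hσ.2.2.2 v ▸ single_le_finsum u (hσ.1.preimage (Prod.mk_left_injective v).injOn)
    fun w => hσ.2.1 (w, v)

lemma IsCoupling.mem_of_ne_zero (hσ : IsCoupling G x y σ) (hxy : G.Adj x y) {u v : V}
    (h : σ (u, v) ≠ 0) :
    u ∈ G.neighborSet x ∧ v ∈ G.neighborSet y \ (G.neighborSet x ∪ {x}) := by
  have hpos : 0 < σ (u, v) := (hσ.2.1 _).lt_of_ne' h
  constructor
  · by_contra hu
    linarith [hσ.le_muX u v, muX_eq_zero_of_notMem hxy hu]
  · by_contra hv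
    have := hσ.le_muY u v
    rw [muY, if_neg hv] at this
    linarith

lemma IsCoupling.sum_row (hσ : IsCoupling G x y σ) (hxy : G.Adj x y) {T : Finset V}
    (hT : G.neighborSet y ⊆ T) (u : V) : ∑ v ∈ T, (σ (u, v) : ℝ) = muX G x y u := by
  rw [← hσ.2.2.1 u, finsum_eq_finsetSum_of_support_subset _ (s := T)
    fun v hv => hT (hσ.mem_of_ne_zero hxy hv).2.1, Int.cast_sum]

lemma IsCoupling.sum_col (hσ : IsCoupling G x y σ) (hxy : G.Adj x y) {T : Finset V}
    (hT : G.neighborSet x ⊆ T) (v : V) : ∑ u ∈ T, (σ (u, v) : ℝ) = muY G x y v := by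
  rw [← hσ.2.2.2 v, finsum_eq_finsetSum_of_support_subset _ (s := T)
    fun u hu => hT (hσ.mem_of_ne_zero hxy hu).1, Int.cast_sum]

lemma support_Bsig_subset :
    support (Bsig G x y σ) ⊆ (G.neighborSet x ∪ {x}) ×ˢ (G.neighborSet y ∪ {y}) := by
  rintro ⟨u, v⟩ h
  simp only [mem_support, Bsig] at h
  split_ifs at h with h₁ h₂ h₃
  · obtain ⟨rfl, rfl⟩ := Prod.mk.inj h₁
    exact ⟨Or.inr rfl, Or.inr rfl⟩
  · obtain ⟨rfl, hx, hy⟩ := h₂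
    exact ⟨hx, hy⟩
  · exact ⟨h₃.1, Or.inl h₃.2.1⟩
  · exact absurd rfl h

lemma finite_support_Bsig (hx : (G.neighborSet x).Finite) (hy : (G.neighborSet y).Finite) :
    (support (Bsig G x y σ)).Finite :=
  ((hx.union (Set.finite_singleton x)).prod (hy.union (Set.finite_singleton y))).subset
    support_Bsig_subset

lemma Bsig_apply_pos : 0 < Bsig G x y σ (x, y) := by
  rw [Bsig, if_pos rfl]
  positivity

lemma Bsig_apply_nonpos (hσ : ∀ p, 0 ≤ σ p) {p : V × V} (hp : p ≠ (x, y)) :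
    Bsig G x y σ p ≤ 0 := by
  rw [Bsig, if_neg hp]
  split_ifs
  · exact neg_nonpos.mpr (by positivity)
  · exact neg_nonpos.mpr (div_nonneg (mod_cast hσ p) (Nat.cast_nonneg _))
  · exact le_rfl

open Classical in
lemma Bsig_apply (hσ : IsCoupling G x y σ) (hxy : G.Adj x y) (u v : V) :
    Bsig G x y σ (u, v) =
      (if (u, v) = (x, y) then 1 + 1 / (deg G y : ℝ) else 0) +
      (if u = v ∧ u ∈ (G.neighborSet x ∪ {x}) ∩ (G.neighborSet y ∪ {y}) then
        -(1 / (deg G y : ℝ)) else 0) -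
      σ (u, v) / (Nat.lcm (deg G x) (deg G y) : ℝ) := by
  by_cases h : σ (u, v) = 0
  · simp only [Bsig, h]
    split_ifs with hA hB
    · obtain ⟨rfl, rfl⟩ := Prod.mk.inj hA
      exact absurd hB.1 hxy.ne
    all_goals simp
  · obtain ⟨hu, hv, hvx⟩ := hσ.mem_of_ne_zero hxy h
    have hvy : v ≠ y := by rintro rfl; exact hvx (Or.inl hxy)
    have huv : u ≠ v := by rintro rfl; exact hvx (Or.inl hu)
    simp only [Bsig, Prod.mk.injEq, hvy, huv, and_false, false_and, if_false]
    rw [if_pos ⟨Or.inl hu, hv, hvx⟩]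
    ring

open Classical in
lemma finsum_Bsig_row (hy : (G.neighborSet y).Finite) (hσ : IsCoupling G x y σ)
    (hxy : G.Adj x y) (u : V) :
    ∑ᶠ v, Bsig G x y σ (u, v) =
      (if u = x then 1 + 1 / (deg G y : ℝ) else 0) +
      (if u ∈ (G.neighborSet x ∪ {x}) ∩ (G.neighborSet y ∪ {y}) then
        -(1 / (deg G y : ℝ)) else 0) -
      muX G x y u / (Nat.lcm (deg G x) (deg G y) : ℝ) := by
  set T := (hy.union (Set.finite_singleton y)).toFinset
  have hT : ∀ v, v ∈ G.neighborSet y ∪ {y} → v ∈ T :=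
    fun v => (Set.Finite.mem_toFinset _).2
  rw [finsum_eq_finsetSum_of_support_subset _ (s := T)
    fun v hv => hT v (support_Bsig_subset (σ := σ) hv).2]
  simp only [Bsig_apply hσ hxy, Finset.sum_sub_distrib, Finset.sum_add_distrib, ← Finset.sum_div,
    hσ.sum_row hxy fun v hv => hT v (Or.inl hv), Prod.mk.injEq, ite_and, Finset.sum_ite_irrel,
    Finset.sum_ite_eq, Finset.sum_ite_eq', Finset.sum_const_zero, if_pos (hT y (Or.inr rfl))]
  by_cases hD : u ∈ (G.neighborSet x ∪ {x}) ∩ (G.neighborSet y ∪ {y})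
  · rw [if_pos (hT u hD.2)]
  · simp only [hD, if_false, ite_self]

open Classical in
lemma finsum_Bsig_col (hx : (G.neighborSet x).Finite) (hσ : IsCoupling G x y σ)
    (hxy : G.Adj x y) (v : V) :
    ∑ᶠ u, Bsig G x y σ (u, v) =
      (if v = y then 1 + 1 / (deg G y : ℝ) else 0) +
      (if v ∈ (G.neighborSet x ∪ {x}) ∩ (G.neighborSet y ∪ {y}) then
        -(1 / (deg G y : ℝ)) else 0) -
      muY G x y v / (Nat.lcm (deg G x) (deg G y) : ℝ) := by
  set T := (hx.union (Set.finite_singleton x)).toFinset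
  have hT : ∀ u, u ∈ G.neighborSet x ∪ {x} → u ∈ T :=
    fun u => (Set.Finite.mem_toFinset _).2
  rw [finsum_eq_finsetSum_of_support_subset _ (s := T)
    fun u hu => hT u (support_Bsig_subset (σ := σ) hu).1]
  simp only [Bsig_apply hσ hxy, Finset.sum_sub_distrib, Finset.sum_add_distrib, ← Finset.sum_div,
    hσ.sum_col hxy fun u hu => hT u (Or.inl hu), Prod.mk.injEq, ite_and, Finset.sum_ite_eq',
    if_pos (hT x (Or.inr rfl))]
  by_cases hD : v ∈ (G.neighborSet x ∪ {x}) ∩ (G.neighborSet y ∪ {y})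
  · rw [if_pos (hT v hD.1)]
  · simp only [hD, if_false, ite_self]

lemma finsum_Bsig_row_of_ne (hx : (G.neighborSet x).Finite) (hy : (G.neighborSet y).Finite)
    (hσ : IsCoupling G x y σ) (hxy : G.Adj x y) {u : V} (hu : u ≠ x) :
    ∑ᶠ v, Bsig G x y σ (u, v) = -m0 G x u := by
  rw [finsum_Bsig_row hy hσ hxy, if_neg hu, m0]
  by_cases hux : u ∈ G.neighborSet x
  · rw [if_pos hux, muX]
    by_cases huy : u ∈ G.neighborSet y ∪ {y}
    · have hshared : u = y ∨ u ∈ G.neighborSet x ∩ G.neighborSet y :=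
        huy.symm.imp Set.mem_singleton_iff.mp (⟨hux, ·⟩)
      rw [if_pos ⟨Or.inl hux, huy⟩, if_pos hshared]
      push_cast
      rw [sub_div, cX_div_lcm hx hy hxy, cY_div_lcm hx hy hxy]
      ring
    · have hshared : ¬(u = y ∨ u ∈ G.neighborSet x ∩ G.neighborSet y) :=
        fun h => huy (h.symm.imp (·.2) Set.mem_singleton_iff.mpr)
      rw [if_neg (huy ·.2), if_neg hshared, if_pos ⟨hux, huy⟩, Int.cast_natCast,
        cX_div_lcm hx hy hxy]
      ring
  · have hD : u ∉ (G.neighborSet x ∪ {x}) ∩ (G.neighborSet y ∪ {y}) :=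
      fun h => h.1.elim hux hu
    rw [if_neg hux, if_neg hD, muX_eq_zero_of_notMem hxy hux]
    simp

lemma finsum_Bsig_row_self (hy : (G.neighborSet y).Finite) (hσ : IsCoupling G x y σ)
    (hxy : G.Adj x y) : ∑ᶠ v, Bsig G x y σ (x, v) = 1 := by
  rw [finsum_Bsig_row hy hσ hxy, muX_eq_zero_of_notMem hxy G.irrefl]
  simp [hxy.symm]

lemma finsum_Bsig_col_of_ne (hx : (G.neighborSet x).Finite) (hy : (G.neighborSet y).Finite)
    (hσ : IsCoupling G x y σ) (hxy : G.Adj x y) {v : V} (hv : v ≠ y) :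
    ∑ᶠ u, Bsig G x y σ (u, v) = -m0 G y v := by
  have hcY := cY_div_lcm hx hy hxy
  rw [finsum_Bsig_col hx hσ hxy, if_neg hv, muY, m0]
  push_cast
  split_ifs <;> simp_all

lemma finsum_Bsig (hx : (G.neighborSet x).Finite) (hy : (G.neighborSet y).Finite)
    (hσ : IsCoupling G x y σ) (hxy : G.Adj x y) : ∑ᶠ p, Bsig G x y σ p = 0 := by
  classical
  have hrow : ∀ u, ∑ᶠ v, Bsig G x y σ (u, v) = (if u = x then 1 else 0) - m0 G x u := by
    intro u
    rcases eq_or_ne u x with rfl | hu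
    · simp [finsum_Bsig_row_self hy hσ hxy, m0]
    · simp [finsum_Bsig_row_of_ne hx hy hσ hxy hu, hu]
  have hδ : (support fun u => if u = x then (1 : ℝ) else 0).Finite :=
    (Set.finite_singleton x).subset fun u hu => by_contra fun h => hu (if_neg h)
  have hm0 : (support (m0 G x)).Finite :=
    hx.subset fun u hu => by_contra fun h => hu (if_neg h)
  rw [finsum_curry _ (finite_support_Bsig hx hy), finsum_congr hrow,
    finsum_sub_distrib hδ hm0, finsum_eq_single _ x fun u hu => if_neg hu, if_pos rfl,
    finsum_m0 hx (deg_ne_zero_of_adj hx hxy), sub_self]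

end LLY

open LLY in
theorem Bsig_isStarCoupling_general {V : Type*} (G : SimpleGraph V)
    (hfin : LocFin G) (x y : V) (hxy : G.Adj x y)
    (σ : V × V → ℤ) (hσ : IsCoupling G x y σ) :
    IsStarCoupling G x y (Bsig G x y σ) :=
  ⟨finite_support_Bsig (hfin x) (hfin y), Bsig_apply_pos, fun _ => Bsig_apply_nonpos hσ.2.1,
    finsum_Bsig (hfin x) (hfin y) hσ hxy,
    fun _ => finsum_Bsig_row_of_ne (hfin x) (hfin y) hσ hxy,
    fun _ => finsum_Bsig_col_of_ne (hfin x) (hfin y) hσ hxy⟩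

open LLY in
/-- If `σ` is a coupling between `μ_x` and `μ_y`, then `B_σ` is a
`*`-coupling between `m_x^0` and `m_y^0`. -/
theorem Bsig_isStarCoupling {V : Type*} (G : SimpleGraph V)
    (hconn : G.Connected) (hfin : LocFin G) (x y : V) (hxy : G.Adj x y)
    (hdeg : deg G x ≤ deg G y) (σ : V × V → ℤ) (hσ : IsCoupling G x y σ) :
    IsStarCoupling G x y (Bsig G x y σ) :=
  Bsig_isStarCoupling_general G hfin x y hxy σ hσ
end

section
/- Let G be a connected locally finite simple graph and let xy be an edge of G with d(x) = d(y) = 3 such that x and y have exactly one common neighbor. Then κ(x,y) ≥ 1/3. -/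
open scoped BigOperators

/-!
For a 1-Lipschitz `f` with `f y - f x = 1`, the common neighbour `w` cancels in
`Δf(x) - Δf(y)`; with `a`, `b` the remaining neighbours of `x`, `y` and `a ~ x ~ y ~ b`,
`3 (Δf(x) - Δf(y)) = 4 (f y - f x) + (f a - f b) ≥ 4 - d(a, b) ≥ 1`.
In a connected graph `f = d(·, x)` is admissible, so the infimum defining `κ` is over a
nonempty set (an empty one would give the junk value `sInf ∅ = 0`).
-/

theorem Set.exists_eq_insert_insert_of_ncard_eq_three {α : Type*} {s : Set α} {p q : α}
    (hs : s.ncard = 3) (hp : p ∈ s) (hq : q ∈ s) (hpq : p ≠ q) :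
    ∃ r, r ≠ p ∧ r ≠ q ∧ s = {p, q, r} := by
  have hsub : {p, q} ⊆ s := Set.insert_subset hp (Set.singleton_subset_iff.mpr hq)
  have hfin : s.Finite := Set.finite_of_ncard_pos (by omega)
  obtain ⟨r, hr⟩ : ∃ r, s \ {p, q} = {r} := by
    rw [← Set.ncard_eq_one, Set.ncard_sdiff hsub (hfin.subset hsub), hs, Set.ncard_pair hpq]
  have hrs : r ∈ s \ {p, q} := hr ▸ rfl
  simp only [Set.mem_sdiff, Set.mem_insert_iff, Set.mem_singleton_iff, not_or] at hrs
  refine ⟨r, hrs.2.1, hrs.2.2, ?_⟩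
  rw [← Set.union_sdiff_cancel hsub, hr, Set.insert_union, Set.singleton_union]

namespace LLY

variable {V : Type*} {G : SimpleGraph V}

theorem grad_of_adj {x y : V} (f : V → ℝ) (h : G.Adj x y) : grad G f x y = f x - f y := by
  rw [grad, SimpleGraph.dist_eq_one_iff_adj.mpr h, Nat.cast_one, div_one]

theorem lap_eq_of_neighborSet_eq_triple {u p q r : V} (f : V → ℝ)
    (h : G.neighborSet u = {p, q, r}) (hpq : p ≠ q) (hpr : p ≠ r) (hqr : q ≠ r) :
    lap G f u = (f p + f q + f r) / 3 - f u := by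
  have hdeg : deg G u = 3 := by
    rw [deg, Nat.card_coe_set_eq, h]
    exact Set.ncard_eq_three.mpr ⟨p, q, r, hpq, hpr, hqr, rfl⟩
  rw [lap, hdeg, h, finsum_mem_insert _ (by simp [hpq, hpr]) (by simp),
    finsum_mem_pair hqr]
  ring

theorem Lip1.dist_left (hG : G.Connected) (x : V) : Lip1 G fun v ↦ (G.dist v x : ℝ) := by
  intro c d
  have hcd : (G.dist c x : ℝ) ≤ G.dist c d + G.dist d x := by exact_mod_cast hG.dist_triangle
  have hdc : (G.dist d x : ℝ) ≤ G.dist c d + G.dist c x := by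
    rw [SimpleGraph.dist_comm (u := c)]; exact_mod_cast hG.dist_triangle
  rw [abs_sub_le_iff]
  constructor <;> linarith

theorem le_kappa {x y : V} {c : ℝ} (hG : G.Connected) (hxy : x ≠ y)
    (h : ∀ f, Lip1 G f → grad G f y x = 1 → c ≤ grad G (lap G f) x y) : c ≤ kappa G x y := by
  have hpos : (0 : ℝ) < G.dist y x := by exact_mod_cast hG.pos_dist_of_ne hxy.symm
  have hgrad : grad G (fun v ↦ (G.dist v x : ℝ)) y x = 1 := by
    rw [grad, SimpleGraph.dist_self, Nat.cast_zero, sub_zero, div_self hpos.ne']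
  refine le_csInf ⟨_, _, Lip1.dist_left hG x, hgrad, rfl⟩ ?_
  rintro k ⟨f, hf, hfxy, rfl⟩
  exact h f hf hfxy

theorem one_third_le_grad_lap {f : V → ℝ} {x y w a b : V} (hf : Lip1 G f)
    (hfxy : grad G f y x = 1) (hxy : G.Adj x y)
    (hx : G.neighborSet x = {y, w, a}) (hy : G.neighborSet y = {x, w, b})
    (hyw : y ≠ w) (hya : y ≠ a) (hwa : w ≠ a) (hxw : x ≠ w) (hxb : x ≠ b) (hwb : w ≠ b) :
    1 / 3 ≤ grad G (lap G f) x y := by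
  have hax : G.Adj a x := G.adj_symm (show a ∈ G.neighborSet x by simp [hx])
  have hyb : G.Adj y b := show b ∈ G.neighborSet y by simp [hy]
  have hdist : G.dist a b ≤ 3 := SimpleGraph.dist_le (.cons hax (.cons hxy (.cons hyb .nil)))
  have hab : -3 ≤ f a - f b :=
    neg_le_of_abs_le ((hf a b).trans (show (G.dist a b : ℝ) ≤ 3 by exact_mod_cast hdist))
  rw [grad_of_adj f hxy.symm] at hfxy
  rw [grad_of_adj _ hxy, lap_eq_of_neighborSet_eq_triple f hx hyw hya hwa,
    lap_eq_of_neighborSet_eq_triple f hy hxw hxb hwb]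
  linarith

end LLY

open LLY in
theorem curv_ge_third_deg_three_general {V : Type*} (G : SimpleGraph V)
    (hconn : G.Connected) (x y : V) (hxy : G.Adj x y)
    (hdx : deg G x = 3) (hdy : deg G y = 3)
    (hcard : Nat.card ↥(G.neighborSet x ∩ G.neighborSet y) = 1) :
    kappa G x y ≥ 1 / 3 := by
  obtain ⟨w, hw⟩ := Set.ncard_eq_one.mp hcard
  obtain ⟨hxw, hyw⟩ : w ∈ G.neighborSet x ∩ G.neighborSet y := hw ▸ rfl
  obtain ⟨a, hay, haw, hx⟩ :=
    Set.exists_eq_insert_insert_of_ncard_eq_three hdx hxy hxw (G.ne_of_adj hyw)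
  obtain ⟨b, hbx, hbw, hy⟩ :=
    Set.exists_eq_insert_insert_of_ncard_eq_three hdy hxy.symm hyw (G.ne_of_adj hxw)
  refine le_kappa hconn hxy.ne fun f hf hfxy ↦ ?_
  exact one_third_le_grad_lap hf hfxy hxy hx hy (G.ne_of_adj hyw) hay.symm haw.symm
    (G.ne_of_adj hxw) hbx.symm hbw.symm

open LLY in
/-- If `xy` is an edge with `d(x) = d(y) = 3` and `x, y` have exactly one
common neighbor, then `κ(x,y) ≥ 1/3`. -/
theorem curv_ge_third_deg_three {V : Type*} (G : SimpleGraph V)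
    (hconn : G.Connected) (hfin : LocFin G) (x y : V) (hxy : G.Adj x y)
    (hdx : deg G x = 3) (hdy : deg G y = 3)
    (hcard : Nat.card ↥(G.neighborSet x ∩ G.neighborSet y) = 1) :
    kappa G x y ≥ 1 / 3 :=
  curv_ge_third_deg_three_general G hconn x y hxy hdx hdy hcard
end

section
/- Let G be a connected locally finite simple graph and let xy be an edge of G with d(x) = 3 and d(y) = k where 3 ≤ k ≤ 10. Suppose |N(x) ∩ N(y)| = 2, and suppose that if k ≥ 4 then y has a neighbor u₂ ∉ N[x] that is adjacent to some vertex u₁ ∈ N(x) ∩ N(y). Then κ(x,y) ≥ 5/k − 1/3 if 3 ≤ k ≤ 6, and κ(x,y) ≥ 7/k − 2/3 if 6 ≤ k ≤ 10; in particular κ(x,y) > 0. -/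
open scoped BigOperators

namespace LLY

variable {V : Type*}

/-- A 1-Lipschitz function has increments at most 1 along edges. -/
lemma lip1_adj {G : SimpleGraph V} {f : V → ℝ} (hf : Lip1 G f) {u v : V}
    (h : G.Adj u v) : f v - f u ≤ 1 := by
  have h1 : G.dist u v = 1 := SimpleGraph.dist_eq_one_iff_adj.mpr h
  have := hf u v
  rw [h1] at this
  have := abs_le.mp this
  push_cast at this
  linarith [this.1]

lemma deg_eq_toFinset_card (G : SimpleGraph V) (hfin : LocFin G) (u : V) :
    (hfin u).toFinset.card = deg G u := by
  rw [deg, Nat.card_eq_card_finite_toFinset (hfin u)]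

set_option maxHeartbeats 1000000 in
/-- Key estimate: for any 1-Lipschitz `f` with `f y - f x = 1`, the Laplacian gradient
is bounded below as claimed. -/
lemma lap_bound {V : Type*} (G : SimpleGraph V)
    (hfin : LocFin G) (x y : V) (k : ℕ) (hxy : G.Adj x y)
    (hdx : deg G x = 3) (hdy : deg G y = k) (hk3 : 3 ≤ k)
    (hcard : Nat.card ↥(G.neighborSet x ∩ G.neighborSet y) = 2)
    (hu2 : 4 ≤ k → ∃ u₂ : V, G.Adj y u₂ ∧ u₂ ∉ G.neighborSet x ∪ {x} ∧
      ∃ u₁ ∈ G.neighborSet x ∩ G.neighborSet y, G.Adj u₂ u₁)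
    (f : V → ℝ) (hf : Lip1 G f) (hfyx : f y - f x = 1) :
    lap G f x - lap G f y ≥
      (if k ≤ 6 then 5 / (k : ℝ) - 1 / 3 else 7 / (k : ℝ) - 2 / 3) := by
  classical
  set Nx : Finset V := (hfin x).toFinset with hNxdef
  set Ny : Finset V := (hfin y).toFinset with hNydef
  have hNxcard : Nx.card = 3 := by rw [hNxdef, deg_eq_toFinset_card G hfin x, hdx]
  have hNycard : Ny.card = k := by rw [hNydef, deg_eq_toFinset_card G hfin y, hdy]
  have hmemNx : ∀ v, v ∈ Nx ↔ G.Adj x v := by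
    intro v; rw [hNxdef, Set.Finite.mem_toFinset]; rfl
  have hmemNy : ∀ v, v ∈ Ny ↔ G.Adj y v := by
    intro v; rw [hNydef, Set.Finite.mem_toFinset]; rfl
  have hyNx : y ∈ Nx := (hmemNx y).mpr hxy
  -- the two common neighbors
  have hCfin : (G.neighborSet x ∩ G.neighborSet y).Finite :=
    (hfin x).subset Set.inter_subset_left
  have hCFcard : hCfin.toFinset.card = 2 := by
    rw [← hcard, Nat.card_eq_card_finite_toFinset hCfin]
  have hCFsub : hCfin.toFinset ⊆ Nx.erase y := by
    intro v hv
    rw [Set.Finite.mem_toFinset] at hv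
    refine Finset.mem_erase.mpr ⟨?_, (hmemNx v).mpr hv.1⟩
    rintro rfl
    exact G.irrefl hv.2
  have herasecard : (Nx.erase y).card = 2 := by
    rw [Finset.card_erase_of_mem hyNx, hNxcard]
  obtain ⟨a, b, hab, hab2⟩ := Finset.card_eq_two.mp herasecard
  have hCF : hCfin.toFinset = Nx.erase y := by
    apply Finset.eq_of_subset_of_card_le hCFsub
    rw [herasecard, hCFcard]
  have haC : a ∈ G.neighborSet x ∩ G.neighborSet y := by
    rw [← Set.Finite.mem_toFinset hCfin, hCF, hab2]; simp
  have hbC : b ∈ G.neighborSet x ∩ G.neighborSet y := by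
    rw [← Set.Finite.mem_toFinset hCfin, hCF, hab2]; simp
  have hxa : G.Adj x a := haC.1
  have hxb : G.Adj x b := hbC.1
  have hya : G.Adj y a := haC.2
  have hyb : G.Adj y b := hbC.2
  have hax : a ≠ x := fun h => G.irrefl (h ▸ hxa)
  have hbx : b ≠ x := fun h => G.irrefl (h ▸ hxb)
  have hyab : y ∉ ({a, b} : Finset V) := by
    rw [← hab2]; exact Finset.notMem_erase y Nx
  have hNxeq : Nx = insert y {a, b} := by
    rw [← hab2, Finset.insert_erase hyNx]
  -- Lipschitz facts
  have hsa0 : (0:ℝ) ≤ f a - f x := by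
    have := lip1_adj hf hya.symm; linarith
  have hsa1 : f a - f x ≤ 1 := lip1_adj hf hxa
  have hsb0 : (0:ℝ) ≤ f b - f x := by
    have := lip1_adj hf hyb.symm; linarith
  have hsb1 : f b - f x ≤ 1 := lip1_adj hf hxb
  -- sum over N(x)
  have hsumx : ∑ᶠ v ∈ G.neighborSet x, (f v - f x)
      = (f y - f x) + ((f a - f x) + (f b - f x)) := by
    rw [finsum_mem_eq_finite_toFinset_sum _ (hfin x), ← hNxdef, hNxeq,
      Finset.sum_insert hyab, Finset.sum_pair hab]
  -- sum over N(y)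
  set T : Finset V := {x, a, b} with hTdef
  have hTsub : T ⊆ Ny := by
    intro v hv
    rw [hTdef] at hv
    simp only [Finset.mem_insert, Finset.mem_singleton] at hv
    rcases hv with rfl | rfl | rfl
    · exact (hmemNy v).mpr hxy.symm
    · exact (hmemNy _).mpr hya
    · exact (hmemNy _).mpr hyb
  have hTcard : T.card = 3 := by
    rw [hTdef]
    rw [Finset.card_insert_of_notMem (by simp [hax.symm, hbx.symm]),
      Finset.card_pair hab]
  have hsumT : ∑ v ∈ T, (f v - f y)
      = (f x - f y) + ((f a - f y) + (f b - f y)) := by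
    rw [hTdef, Finset.sum_insert (by simp [hax.symm, hbx.symm]), Finset.sum_pair hab]
  set R : Finset V := Ny \ T with hRdef
  have hRcard : R.card = k - 3 := by
    rw [hRdef, Finset.card_sdiff_of_subset hTsub, hNycard, hTcard]
  have hsumy : ∑ᶠ v ∈ G.neighborSet y, (f v - f y)
      = (∑ w ∈ R, (f w - f y)) + ((f x - f y) + ((f a - f y) + (f b - f y))) := by
    rw [finsum_mem_eq_finite_toFinset_sum _ (hfin y), ← hNydef, ← hsumT, hRdef,
      Finset.sum_sdiff hTsub]
  have hRone : ∀ w ∈ R, f w - f y ≤ 1 := by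
    intro w hw
    have hwNy : w ∈ Ny := (Finset.sdiff_subset) hw
    exact lip1_adj hf ((hmemNy w).mp hwNy)
  -- main estimate on the sum over R
  have hK0 : (0:ℝ) < (k:ℝ) := by positivity
  have hlapx : lap G f x = (1/3) * ((f y - f x) + ((f a - f x) + (f b - f x))) := by
    rw [lap, hsumx, hdx]; norm_num
  have hlapy : lap G f y = (1/(k:ℝ)) *
      ((∑ w ∈ R, (f w - f y)) + ((f x - f y) + ((f a - f y) + (f b - f y)))) := by
    rw [lap, hsumy, hdy]
  rcases eq_or_lt_of_le hk3 with hk3' | hk4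
  · -- k = 3
    have hk : k = 3 := hk3'.symm
    subst hk
    have hRempty : R = ∅ := Finset.card_eq_zero.mp (by rw [hRcard])
    rw [hlapx, hlapy, hRempty, Finset.sum_empty, if_pos (by norm_num)]
    push_cast
    linarith
  · -- k ≥ 4
    have hk4' : 4 ≤ k := hk4
    obtain ⟨u₂, hyu₂, hu₂not, u₁, hu₁C, hu₂u₁⟩ := hu2 hk4'
    have hu₂Ny : u₂ ∈ Ny := (hmemNy u₂).mpr hyu₂
    have hu₂x : u₂ ≠ x := by
      intro h; exact hu₂not (Or.inr (by simp [h]))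
    have hu₂Nx : u₂ ∉ G.neighborSet x := fun h => hu₂not (Or.inl h)
    have hu₂a : u₂ ≠ a := by rintro rfl; exact hu₂Nx hxa
    have hu₂b : u₂ ≠ b := by rintro rfl; exact hu₂Nx hxb
    have hu₂T : u₂ ∉ T := by
      rw [hTdef]; simp [hu₂x, hu₂a, hu₂b]
    have hu₂R : u₂ ∈ R := Finset.mem_sdiff.mpr ⟨hu₂Ny, hu₂T⟩
    -- u₁ is a or b
    have hu₁ab : u₁ = a ∨ u₁ = b := by
      have : u₁ ∈ ({a, b} : Finset V) := by
        rw [← hab2, ← hCF, Set.Finite.mem_toFinset]; exact hu₁C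
      simpa using this
    have hu₂bound : f u₂ - f y ≤ f u₁ - f x := by
      have h1 : f u₂ - f u₁ ≤ 1 := lip1_adj hf hu₂u₁.symm
      linarith
    -- bound the sum over R
    have hRsum : ∑ w ∈ R, (f w - f y) ≤ (f u₁ - f x) + ((k:ℝ) - 4) := by
      have hsplit : ∑ w ∈ R, (f w - f y)
          = (f u₂ - f y) + ∑ w ∈ R.erase u₂, (f w - f y) :=
        (Finset.add_sum_erase R _ hu₂R).symm
      have hcardE : (R.erase u₂).card = k - 4 := by
        rw [Finset.card_erase_of_mem hu₂R, hRcard]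
        omega
      have hrest : ∑ w ∈ R.erase u₂, (f w - f y) ≤ ((k:ℝ) - 4) := by
        calc ∑ w ∈ R.erase u₂, (f w - f y)
            ≤ (R.erase u₂).card • (1:ℝ) :=
              Finset.sum_le_card_nsmul _ _ _
                (fun w hw => hRone w (Finset.erase_subset _ _ hw))
          _ = ((k - 4 : ℕ) : ℝ) := by rw [hcardE]; simp
          _ = ((k:ℝ) - 4) := by
              rw [Nat.cast_sub hk4']; norm_num
      linarith
    have hu₁0 : (0:ℝ) ≤ f u₁ - f x := by
      rcases hu₁ab with rfl | rfl <;> assumption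
    have hu₁1 : f u₁ - f x ≤ 1 := by
      rcases hu₁ab with rfl | rfl <;> assumption
    have hKk : (3:ℝ) < (k:ℝ) := by exact_mod_cast hk4
    rw [hlapx, hlapy]
    set sa := f a - f x with hsadef
    set sb := f b - f x with hsbdef
    set su := f u₁ - f x with hsudef
    have hfay : f a - f y = sa - 1 := by rw [hsadef]; linarith
    have hfby : f b - f y = sb - 1 := by rw [hsbdef]; linarith
    have hfxy : f x - f y = -1 := by linarith
    rw [hfay, hfby, hfxy, hfyx]
    have hsusum : su ≤ sa + sb := by
      rcases hu₁ab with h | h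
      · rw [hsudef, h, ← hsadef]; linarith
      · rw [hsudef, h, ← hsbdef]; linarith
    -- reduce to the bound with the sum replaced by its upper bound
    have hmono : (1/3) * (1 + (sa + sb)) -
        (1/(k:ℝ)) * (((su + ((k:ℝ) - 4))) + (-1 + ((sa - 1) + (sb - 1))))
        ≤ (1/3) * (1 + (sa + sb)) -
        (1/(k:ℝ)) * ((∑ w ∈ R, (f w - f y)) + (-1 + ((sa - 1) + (sb - 1)))) := by
      have h1 : (0:ℝ) ≤ 1/(k:ℝ) := by positivity
      have h2 : (1/(k:ℝ)) * ((∑ w ∈ R, (f w - f y)) + (-1 + ((sa - 1) + (sb - 1))))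
          ≤ (1/(k:ℝ)) * (((su + ((k:ℝ) - 4))) + (-1 + ((sa - 1) + (sb - 1)))) :=
        mul_le_mul_of_nonneg_left (by linarith [hRsum]) h1
      linarith [h2]
    refine le_trans ?_ hmono
    have hinv : (1/(k:ℝ)) * (k:ℝ) = 1 := by
      field_simp
    by_cases hk6 : k ≤ 6
    · rw [if_pos hk6]
      have hK6 : (k:ℝ) ≤ 6 := by exact_mod_cast hk6
      rw [← sub_nonneg]
      have key : (0:ℝ) ≤ (k:ℝ) * ((1/3) * (1 + (sa + sb)) -
          (1/(k:ℝ)) * ((su + ((k:ℝ) - 4)) + (-1 + ((sa - 1) + (sb - 1))))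
          - (5 / (k:ℝ) - 1/3)) := by
        have e1 : (k:ℝ) * ((1/(k:ℝ)) * ((su + ((k:ℝ) - 4)) + (-1 + ((sa - 1) + (sb - 1)))))
            = ((su + ((k:ℝ) - 4)) + (-1 + ((sa - 1) + (sb - 1)))) := by
          rw [← mul_assoc, mul_one_div_cancel hK0.ne', one_mul]
        have e2 : (k:ℝ) * (5 / (k:ℝ)) = 5 := by
          field_simp
        have expand : (k:ℝ) * ((1/3) * (1 + (sa + sb)) -
            (1/(k:ℝ)) * ((su + ((k:ℝ) - 4)) + (-1 + ((sa - 1) + (sb - 1))))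
            - (5 / (k:ℝ) - 1/3))
            = (k:ℝ) * ((1/3) * (1 + (sa + sb))) -
              ((su + ((k:ℝ) - 4)) + (-1 + ((sa - 1) + (sb - 1))))
              - (5 - (k:ℝ) * (1/3)) := by
          rw [mul_sub, mul_sub, e1, mul_sub, e2]
        rw [expand]
        -- goal: 0 ≤ K/3 (1+sa+sb) - (su + sa + sb + K - 7) - 5 + K/3
        have p1 : (0:ℝ) ≤ (6 - (k:ℝ)) * (1 - su) :=
          mul_nonneg (by linarith) (by linarith)
        have p2 : (0:ℝ) ≤ ((k:ℝ) - 3) * (sa + sb - su) :=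
          mul_nonneg (by linarith) (by linarith)
        nlinarith [p1, p2]
      exact (mul_nonneg_iff_of_pos_left hK0).mp key
    · rw [if_neg hk6]
      have hK6 : (6:ℝ) ≤ (k:ℝ) := by
        have : 6 ≤ k := by omega
        exact_mod_cast this
      rw [← sub_nonneg]
      have key : (0:ℝ) ≤ (k:ℝ) * ((1/3) * (1 + (sa + sb)) -
          (1/(k:ℝ)) * ((su + ((k:ℝ) - 4)) + (-1 + ((sa - 1) + (sb - 1))))
          - (7 / (k:ℝ) - 2/3)) := by
        have e1 : (k:ℝ) * ((1/(k:ℝ)) * ((su + ((k:ℝ) - 4)) + (-1 + ((sa - 1) + (sb - 1)))))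
            = ((su + ((k:ℝ) - 4)) + (-1 + ((sa - 1) + (sb - 1)))) := by
          rw [← mul_assoc, mul_one_div_cancel hK0.ne', one_mul]
        have e2 : (k:ℝ) * (7 / (k:ℝ)) = 7 := by
          field_simp
        have expand : (k:ℝ) * ((1/3) * (1 + (sa + sb)) -
            (1/(k:ℝ)) * ((su + ((k:ℝ) - 4)) + (-1 + ((sa - 1) + (sb - 1))))
            - (7 / (k:ℝ) - 2/3))
            = (k:ℝ) * ((1/3) * (1 + (sa + sb))) -
              ((su + ((k:ℝ) - 4)) + (-1 + ((sa - 1) + (sb - 1))))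
              - (7 - (k:ℝ) * (2/3)) := by
          rw [mul_sub, mul_sub, e1, mul_sub, e2]
        rw [expand]
        have p1 : (0:ℝ) ≤ ((k:ℝ) - 6) * su :=
          mul_nonneg (by linarith) (by linarith)
        have p2 : (0:ℝ) ≤ ((k:ℝ) - 3) * (sa + sb - su) :=
          mul_nonneg (by linarith) (by linarith)
        nlinarith [p1, p2]
      exact (mul_nonneg_iff_of_pos_left hK0).mp key

end LLY

set_option maxHeartbeats 1000000 in
open LLY in
/-- Let `xy` be an edge with `d(x) = 3`, `d(y) = k`, `3 ≤ k ≤ 10`,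
`|N(x) ∩ N(y)| = 2`, and if `k ≥ 4` then `y` has a neighbor `u₂ ∉ N[x]` adjacent to some
`u₁ ∈ N(x) ∩ N(y)`. Then `κ(x,y) ≥ 5/k - 1/3` if `3 ≤ k ≤ 6`, `κ(x,y) ≥ 7/k - 2/3` if
`6 ≤ k ≤ 10`, and in particular `κ(x,y) > 0`. -/
theorem curv_two_common_neighbors_bounds {V : Type*} (G : SimpleGraph V)
    (hconn : G.Connected) (hfin : LocFin G) (x y : V) (k : ℕ) (hxy : G.Adj x y)
    (hdx : deg G x = 3) (hdy : deg G y = k) (hk3 : 3 ≤ k) (hk10 : k ≤ 10)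
    (hcard : Nat.card ↥(G.neighborSet x ∩ G.neighborSet y) = 2)
    (hu2 : 4 ≤ k → ∃ u₂ : V, G.Adj y u₂ ∧ u₂ ∉ G.neighborSet x ∪ {x} ∧
      ∃ u₁ ∈ G.neighborSet x ∩ G.neighborSet y, G.Adj u₂ u₁) :
    (3 ≤ k → k ≤ 6 → kappa G x y ≥ 5 / (k : ℝ) - 1 / 3) ∧
      (6 ≤ k → k ≤ 10 → kappa G x y ≥ 7 / (k : ℝ) - 2 / 3) ∧
      0 < kappa G x y := by
  classical
  have hdistxy : G.dist x y = 1 := SimpleGraph.dist_eq_one_iff_adj.mpr hxy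
  have hdistyx : G.dist y x = 1 := SimpleGraph.dist_eq_one_iff_adj.mpr hxy.symm
  set B : ℝ := if k ≤ 6 then 5 / (k : ℝ) - 1 / 3 else 7 / (k : ℝ) - 2 / 3 with hBdef
  -- the defining set of kappa
  set S : Set ℝ :=
    {c : ℝ | ∃ f : V → ℝ, Lip1 G f ∧ grad G f y x = 1 ∧ c = grad G (lap G f) x y}
    with hSdef
  -- nonempty: use the distance function from x
  have hSne : S.Nonempty := by
    refine ⟨grad G (lap G (fun v => (G.dist x v : ℝ))) x y,
      (fun v => (G.dist x v : ℝ)), ?_, ?_, rfl⟩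
    · intro u v
      have h1 : G.dist x u ≤ G.dist x v + G.dist u v := by
        calc G.dist x u ≤ G.dist x v + G.dist v u := hconn.dist_triangle
          _ = G.dist x v + G.dist u v := by
              congr 1
              exact SimpleGraph.dist_comm
      have h2 : G.dist x v ≤ G.dist x u + G.dist u v := hconn.dist_triangle
      have h1' : (G.dist x u : ℝ) ≤ (G.dist x v : ℝ) + (G.dist u v : ℝ) := by
        exact_mod_cast h1
      have h2' : (G.dist x v : ℝ) ≤ (G.dist x u : ℝ) + (G.dist u v : ℝ) := by
        exact_mod_cast h2
      show |(G.dist x u : ℝ) - (G.dist x v : ℝ)| ≤ (G.dist u v : ℝ)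
      rw [abs_le]
      constructor <;> linarith
    · show ((G.dist x y : ℝ) - (G.dist x x : ℝ)) / (G.dist y x : ℝ) = 1
      rw [hdistyx, hdistxy, SimpleGraph.dist_self]
      norm_num
  -- lower bound on all elements
  have hSlb : ∀ c ∈ S, B ≤ c := by
    rintro c ⟨f, hf, hgrad, rfl⟩
    have hfyx : f y - f x = 1 := by
      rw [grad, hdistyx] at hgrad
      simpa using hgrad
    have := lap_bound G hfin x y k hxy hdx hdy hk3 hcard hu2 f hf hfyx
    rw [grad, hdistxy, hBdef]
    rw [Nat.cast_one, div_one]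
    exact this
  have hkB : B ≤ kappa G x y := by
    rw [kappa]
    exact le_csInf hSne hSlb
  have hK0 : (0:ℝ) < (k:ℝ) := by positivity
  have hKle : (k:ℝ) ≤ 10 := by exact_mod_cast hk10
  have hKge : (3:ℝ) ≤ (k:ℝ) := by exact_mod_cast hk3
  have hBpos : 0 < B := by
    rw [hBdef]
    by_cases h6 : k ≤ 6
    · rw [if_pos h6]
      have : (k:ℝ) ≤ 6 := by exact_mod_cast h6
      rw [sub_pos, div_lt_div_iff₀ (by norm_num) hK0]
      linarith
    · rw [if_neg h6]
      rw [sub_pos, div_lt_div_iff₀ (by norm_num) hK0]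
      linarith
  rw [hBdef] at hkB
  refine ⟨?_, ?_, lt_of_lt_of_le hBpos (hBdef ▸ hkB)⟩
  · intro _ h6
    rw [if_pos h6] at hkB
    exact hkB
  · intro h6 _
    by_cases h6' : k ≤ 6
    · have hk6 : k = 6 := le_antisymm h6' h6
      subst hk6
      rw [if_pos (by norm_num)] at hkB
      norm_num at hkB ⊢
      linarith
    · rw [if_neg h6'] at hkB
      exact hkB
end

section
/- Let G be a connected locally finite simple graph, let v₁ ≠ v₂ be non-adjacent vertices of G, and let G' = G + v₁v₂ be the graph obtained by adding the edge v₁v₂. Then for every edge uv of G with u ∉ {v₁, v₂} and v ∉ {v₁, v₂}, one has κ_{G'}(u,v) ≥ κ_G(u,v). -/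
open scoped BigOperators

open LLY

section Aux

variable {V : Type*}

private lemma dist_mono' {G G' : SimpleGraph V} (h : G ≤ G') {a b : V}
    (hr : G.Reachable a b) : G'.dist a b ≤ G.dist a b := by
  obtain ⟨p, hp⟩ := hr.exists_walk_length_eq_dist
  calc G'.dist a b ≤ (p.mapLe h).length := SimpleGraph.dist_le _
    _ = G.dist a b := by
        simp only [SimpleGraph.Walk.mapLe, SimpleGraph.Walk.length_map, hp]

private lemma abs_lap_le_one {G : SimpleGraph V} (hfin : LocFin G) {f : V → ℝ}
    (hf : Lip1 G f) {u w0 : V} (hadj : G.Adj u w0) : |lap G f u| ≤ 1 := by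
  have hN : (G.neighborSet u).Finite := hfin u
  have hd : deg G u = hN.toFinset.card := by
    rw [deg, Nat.card_coe_set_eq, Set.ncard_eq_toFinset_card _ hN]
  have hdpos : 0 < (deg G u : ℝ) := by
    have hmem : w0 ∈ hN.toFinset := by simpa using hadj
    have : 0 < hN.toFinset.card := Finset.card_pos.mpr ⟨w0, hmem⟩
    rw [hd]; exact_mod_cast this
  have hsum : |∑ w ∈ hN.toFinset, (f w - f u)| ≤ (deg G u : ℝ) := by
    calc |∑ w ∈ hN.toFinset, (f w - f u)| ≤ ∑ w ∈ hN.toFinset, |f w - f u| :=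
        Finset.abs_sum_le_sum_abs _ _
      _ ≤ ∑ _w ∈ hN.toFinset, (1 : ℝ) := by
          refine Finset.sum_le_sum fun w hw => ?_
          have hadjw : G.Adj u w := by simpa using hw
          have hdw : G.dist w u = 1 := SimpleGraph.dist_eq_one_iff_adj.mpr hadjw.symm
          have := hf w u
          rw [hdw] at this; simpa using this
      _ = (deg G u : ℝ) := by simp [hd]
  rw [lap, finsum_mem_eq_finite_toFinset_sum _ hN, abs_mul,
    abs_of_nonneg (by positivity : (0:ℝ) ≤ 1 / (deg G u : ℝ)),
    div_mul_eq_mul_div, one_mul, div_le_one hdpos]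
  exact hsum

end Aux

open LLY in
/-- Let `v₁ ≠ v₂` be non-adjacent vertices of `G` and let
`G' = G + v₁v₂`. Then every edge `uv` of `G` with `u, v ∉ {v₁, v₂}` satisfies
`κ_{G'}(u,v) ≥ κ_G(u,v)`. -/
theorem curv_add_edge {V : Type*} (G : SimpleGraph V)
    (hconn : G.Connected) (hfin : LocFin G) (v₁ v₂ : V) (hne : v₁ ≠ v₂)
    (hnadj : ¬ G.Adj v₁ v₂) :
    ∀ u v : V, G.Adj u v → u ∉ ({v₁, v₂} : Set V) → v ∉ ({v₁, v₂} : Set V) →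
      kappa (G ⊔ SimpleGraph.fromEdgeSet {s(v₁, v₂)}) u v ≥ kappa G u v := by
  intro u v huv hu hv
  simp only [Set.mem_insert_iff, Set.mem_singleton_iff, not_or] at hu hv
  set G' := G ⊔ SimpleGraph.fromEdgeSet {s(v₁, v₂)} with hG'
  have hle : G ≤ G' := le_sup_left
  have hconn' : G'.Connected := hconn.mono hle
  have hadj' : G'.Adj u v := hG' ▸ (SimpleGraph.sup_adj _ _ _ _).mpr (Or.inl huv)
  have hdG : G.dist u v = 1 := SimpleGraph.dist_eq_one_iff_adj.mpr huv
  have hdG' : G'.dist u v = 1 := SimpleGraph.dist_eq_one_iff_adj.mpr hadj'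
  have hdGvu : G.dist v u = 1 := SimpleGraph.dist_eq_one_iff_adj.mpr huv.symm
  have hdG'vu : G'.dist v u = 1 := SimpleGraph.dist_eq_one_iff_adj.mpr hadj'.symm
  have hNeq : ∀ w : V, w ≠ v₁ → w ≠ v₂ → G'.neighborSet w = G.neighborSet w := by
    intro w hw1 hw2
    ext z
    simp only [SimpleGraph.mem_neighborSet, hG', SimpleGraph.sup_adj,
      SimpleGraph.fromEdgeSet_adj, Set.mem_singleton_iff, Sym2.eq_iff]
    constructor
    · rintro (h | ⟨(⟨rfl, rfl⟩ | ⟨rfl, rfl⟩), _⟩)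
      · exact h
      · exact absurd rfl hw1
      · exact absurd rfl hw2
    · exact Or.inl
  have hlap : ∀ (f : V → ℝ) (w : V), w ≠ v₁ → w ≠ v₂ → lap G' f w = lap G f w := by
    intro f w hw1 hw2
    rw [lap, lap, deg, deg, hNeq w hw1 hw2]
  refine csInf_le_csInf ?_ ?_ ?_
  · -- BddBelow of the G-set
    refine ⟨-2, ?_⟩
    rintro k ⟨f, hf, -, rfl⟩
    have h1 := abs_le.mp (abs_lap_le_one hfin hf huv)
    have h2 := abs_le.mp (abs_lap_le_one hfin hf huv.symm)
    rw [grad, hdG]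
    push_cast
    rw [div_one]
    linarith [h1.1, h1.2, h2.1, h2.2]
  · -- Nonempty of the G'-set
    refine ⟨_, fun a => (G'.dist a u : ℝ), ?_, ?_, rfl⟩
    · intro a b
      have t1 : (G'.dist a u : ℝ) ≤ G'.dist a b + G'.dist b u := by
        exact_mod_cast hconn'.dist_triangle
      have t2 : (G'.dist b u : ℝ) ≤ G'.dist b a + G'.dist a u := by
        exact_mod_cast hconn'.dist_triangle
      have hcomm : G'.dist b a = G'.dist a b := SimpleGraph.dist_comm
      rw [hcomm] at t2
      rw [abs_le]
      constructor <;> linarith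
    · rw [grad, hdG'vu, SimpleGraph.dist_self]
      norm_num
  · -- subset
    rintro k ⟨f, hf, hgrad, rfl⟩
    refine ⟨f, ?_, ?_, ?_⟩
    · intro a b
      refine (hf a b).trans ?_
      exact_mod_cast dist_mono' hle (hconn.preconnected a b)
    · rw [grad, hdG'vu] at hgrad
      rw [grad, hdGvu]
      exact hgrad
    · rw [grad, grad, hdG, hdG', hlap f u hu.1 hu.2, hlap f v hv.1 hv.2]
end
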